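/- arXiv:2501.12737 — 5 statements merged into one kernel-verified Lean document; each statement's English description precedes it below -/
import Mathlib

section
/- Let U(θ) = V₁ e^{-i θ_1 P_1/2} V₂ e^{-i θ_2 P_2/2} ⋯ V_K e^{-i θ_K P_K/2} V_{K+1} be a parameterized unitary, where θ ∈ ℝ^K, each V_k is a fixed unitary matrix and each P_k is a Hermitian unitary matrix (P_k² = I). Then for any two parameter vectors θ₁, θ₂ ∈ ℝ^K, ‖U(θ₁) − U(θ₂)‖ ≤ (√K / 2) · ‖θ₁ − θ₂‖₂. -/
open scoped Matrix Matrix.Norms.L2Operator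
open Finset

noncomputable section

/-- The rotation gate `e^{-i θ P / 2}` generated by a matrix `P`. -/
def rotGate {N : ℕ} (P : Matrix (Fin (2^N)) (Fin (2^N)) ℂ) (θ : ℝ) :
    Matrix (Fin (2^N)) (Fin (2^N)) ℂ :=
  NormedSpace.exp ((-(θ / 2 : ℂ) * Complex.I) • P)

/-- The parameterized circuit `U(θ) = V₁ e^{-iθ₁P₁/2} V₂ ⋯ V_K e^{-iθ_K P_K/2} V_{K+1}`. -/
def circuit {N K : ℕ} (V : Fin (K + 1) → Matrix (Fin (2^N)) (Fin (2^N)) ℂ)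
    (P : Fin K → Matrix (Fin (2^N)) (Fin (2^N)) ℂ) (θ : EuclideanSpace ℝ (Fin K)) :
    Matrix (Fin (2^N)) (Fin (2^N)) ℂ :=
  (List.ofFn fun k : Fin K => V k.castSucc * rotGate (P k) (θ k)).prod * V (Fin.last K)

/-- QNN output `f_θ(x) = Tr(O U(θ) ρ(x) U(θ)†)` (a real number). -/
def qnnOut {N K : ℕ} (V : Fin (K + 1) → Matrix (Fin (2^N)) (Fin (2^N)) ℂ)
    (P : Fin K → Matrix (Fin (2^N)) (Fin (2^N)) ℂ)
    (O ρ : Matrix (Fin (2^N)) (Fin (2^N)) ℂ) (θ : EuclideanSpace ℝ (Fin K)) : ℝ :=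
  ((O * circuit V P θ * ρ * (circuit V P θ)ᴴ).trace).re

/-- Parameter-shift gradient of the QNN output, as a vector in `ℝ^K`. -/
def qnnGrad {N K : ℕ} (V : Fin (K + 1) → Matrix (Fin (2^N)) (Fin (2^N)) ℂ)
    (P : Fin K → Matrix (Fin (2^N)) (Fin (2^N)) ℂ)
    (O ρ : Matrix (Fin (2^N)) (Fin (2^N)) ℂ) (θ : EuclideanSpace ℝ (Fin K)) :
    EuclideanSpace ℝ (Fin K) :=
  (WithLp.equiv 2 (Fin K → ℝ)).symm fun j =>
    (qnnOut V P O ρ (θ + (Real.pi / 2) • EuclideanSpace.single j 1)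
      - qnnOut V P O ρ (θ - (Real.pi / 2) • EuclideanSpace.single j 1)) / 2

section Aux

variable {N : ℕ}

lemma exp_smul_eq' {P : Matrix (Fin (2^N)) (Fin (2^N)) ℂ} (hP : P * P = 1) (z : ℂ) :
    NormedSpace.exp (z • P) = Complex.cosh z • 1 + Complex.sinh z • P := by
  have h2 : ∀ k : ℕ, P ^ k * P ^ k = 1 := fun k => by
    rw [← pow_add, ← two_mul, pow_mul, sq, hP, one_pow]
  rw [NormedSpace.exp_eq_tsum (𝕂 := ℂ)]
  refine HasSum.tsum_eq ?_
  refine HasSum.even_add_odd ?_ ?_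
  · have h := (Complex.hasSum_cosh z).smul_const (1 : Matrix (Fin (2^N)) (Fin (2^N)) ℂ)
    convert h using 2 with k
    · rfl
    simp [smul_pow, pow_mul, sq, smul_smul, div_eq_mul_inv, mul_comm, h2]
  · have h := (Complex.hasSum_sinh z).smul_const P
    convert h using 2 with k
    · rfl
    simp [smul_pow, smul_smul, div_eq_mul_inv, mul_comm, pow_succ, pow_mul, sq, h2]

lemma rotGate_formula' {P : Matrix (Fin (2^N)) (Fin (2^N)) ℂ} (hP : P * P = 1) (θ : ℝ) :
    rotGate P θ = (Complex.cos ((θ:ℂ)/2)) • 1 + (-(Complex.sin ((θ:ℂ)/2)) * Complex.I) • P := by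
  rw [rotGate, exp_smul_eq' hP]
  congr 1
  · congr 1
    rw [show (-(θ / 2 : ℂ) * Complex.I) = (-((θ:ℂ)/2)) * Complex.I by ring,
      Complex.cosh_mul_I, Complex.cos_neg]
  · congr 1
    rw [show (-(θ / 2 : ℂ) * Complex.I) = (-((θ:ℂ)/2)) * Complex.I by ring,
      Complex.sinh_mul_I, Complex.sin_neg]

lemma rotGate_mem' {P : Matrix (Fin (2^N)) (Fin (2^N)) ℂ} (hPH : P.IsHermitian) (θ : ℝ) :
    rotGate P θ ∈ unitary (Matrix (Fin (2^N)) (Fin (2^N)) ℂ) := by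
  let +nondep : NormedAlgebra ℚ (Matrix (Fin (2^N)) (Fin (2^N)) ℂ) := .restrictScalars ℚ ℂ _
  apply NormedSpace.exp_mem_unitary_of_mem_skewAdjoint
  rw [skewAdjoint.mem_iff]
  rw [star_smul, Matrix.star_eq_conjTranspose, hPH.eq, ← neg_smul]
  congr 1
  simp [Complex.ext_iff]

lemma matrix_nontrivial' : Nontrivial (Matrix (Fin (2^N)) (Fin (2^N)) ℂ) := by
  haveI : NeZero (2^N) := ⟨by positivity⟩
  exact Matrix.nonempty

lemma rot_diff' {P : Matrix (Fin (2^N)) (Fin (2^N)) ℂ} (hPH : P.IsHermitian)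
    (hPU : P ∈ Matrix.unitaryGroup (Fin (2^N)) ℂ) (a b : ℝ) :
    ‖rotGate P a - rotGate P b‖ ≤ |a - b| / 2 := by
  haveI : Nontrivial (Matrix (Fin (2^N)) (Fin (2^N)) ℂ) := matrix_nontrivial'
  have hP : P * P = 1 := by
    have := hPU.2
    rwa [Matrix.star_eq_conjTranspose, hPH.eq] at this
  set t : ℝ := (a - b) / 4 with ht
  set mm : ℝ := (a + b) / 4 with hmm
  have e1 : ((a:ℂ)/2 + (b:ℂ)/2)/2 = ((mm : ℝ) : ℂ) := by rw [hmm]; push_cast; ring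
  have e2 : ((a:ℂ)/2 - (b:ℂ)/2)/2 = ((t : ℝ) : ℂ) := by rw [ht]; push_cast; ring
  have hdiff : rotGate P a - rotGate P b
      = ((-2 : ℂ) * Complex.sin t) •
        ((Complex.sin mm) • (1 : Matrix (Fin (2^N)) (Fin (2^N)) ℂ)
          + (Complex.I * Complex.cos mm) • P) := by
    rw [rotGate_formula' hP, rotGate_formula' hP]
    have hcos : Complex.cos ((a:ℂ)/2) - Complex.cos ((b:ℂ)/2)
        = -2 * Complex.sin mm * Complex.sin t := by
      rw [Complex.cos_sub_cos, e1, e2]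
    have hsin : Complex.sin ((a:ℂ)/2) - Complex.sin ((b:ℂ)/2)
        = 2 * Complex.sin t * Complex.cos mm := by
      rw [Complex.sin_sub_sin, e1, e2]
    rw [add_sub_add_comm, ← sub_smul, ← sub_smul, hcos]
    rw [show (-(Complex.sin ((a:ℂ)/2)) * Complex.I - -(Complex.sin ((b:ℂ)/2)) * Complex.I)
        = -(Complex.sin ((a:ℂ)/2) - Complex.sin ((b:ℂ)/2)) * Complex.I by ring, hsin]
    rw [smul_add, smul_smul, smul_smul]
    congr 2 <;> ring
  have e3 : ((2 * mm : ℝ) : ℂ) / 2 = ((mm : ℝ) : ℂ) := by push_cast; ring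
  have hMunit : (Complex.sin mm) • (1 : Matrix (Fin (2^N)) (Fin (2^N)) ℂ)
      + (Complex.I * Complex.cos mm) • P
      = Complex.I • (P * rotGate P (2 * mm)) := by
    rw [rotGate_formula' hP, e3]
    rw [Matrix.mul_add, Matrix.mul_smul, Matrix.mul_smul, mul_one, hP, smul_add,
      smul_smul, smul_smul]
    rw [show Complex.I * (-(Complex.sin ((mm:ℝ):ℂ)) * Complex.I)
          = -(Complex.I * Complex.I) * Complex.sin ((mm:ℝ):ℂ) by ring, Complex.I_mul_I]
    module
  rw [hdiff, norm_smul, hMunit, norm_smul]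
  have h1 : ‖P * rotGate P (2 * mm)‖ = 1 :=
    CStarRing.norm_of_mem_unitary (mul_mem hPU (rotGate_mem' hPH _))
  rw [h1]
  simp only [Complex.norm_I, mul_one, one_mul]
  have h2 : ‖(-2 : ℂ) * Complex.sin (t:ℂ)‖ = 2 * |Real.sin t| := by
    rw [norm_mul, ← Complex.ofReal_sin, Complex.norm_real]
    norm_num
  rw [h2]
  have hst : |Real.sin t| ≤ |t| := Real.abs_sin_le_abs
  have : |t| = |a - b| / 4 := by rw [ht, abs_div]; norm_num
  nlinarith [abs_nonneg (Real.sin t)]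

lemma prod_norm_le_one' (l : List (Matrix (Fin (2^N)) (Fin (2^N)) ℂ))
    (h : ∀ x ∈ l, ‖x‖ ≤ 1) : ‖l.prod‖ ≤ 1 := by
  haveI : Nontrivial (Matrix (Fin (2^N)) (Fin (2^N)) ℂ) := matrix_nontrivial'
  induction l with
  | nil => simp
  | cons a l ih =>
    rw [List.prod_cons]
    calc ‖a * l.prod‖ ≤ ‖a‖ * ‖l.prod‖ := norm_mul_le _ _
      _ ≤ 1 * 1 := by
          apply mul_le_mul (h a (by simp)) (ih fun x hx => h x (by simp [hx]))
            (norm_nonneg _) zero_le_one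
      _ = 1 := one_mul 1

lemma telescope' (l : List (Matrix (Fin (2^N)) (Fin (2^N)) ℂ × Matrix (Fin (2^N)) (Fin (2^N)) ℂ))
    (h1 : ∀ p ∈ l, ‖p.1‖ ≤ 1) (h2 : ∀ p ∈ l, ‖p.2‖ ≤ 1) :
    ‖(l.map Prod.fst).prod - (l.map Prod.snd).prod‖ ≤ (l.map fun p => ‖p.1 - p.2‖).sum := by
  induction l with
  | nil => simp
  | cons p l ih =>
    simp only [List.map_cons, List.prod_cons, List.sum_cons]
    have key : p.1 * (l.map Prod.fst).prod - p.2 * (l.map Prod.snd).prod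
        = (p.1 - p.2) * (l.map Prod.fst).prod
          + p.2 * ((l.map Prod.fst).prod - (l.map Prod.snd).prod) := by
      rw [Matrix.sub_mul, Matrix.mul_sub]; abel
    rw [key]
    calc ‖_ + _‖ ≤ ‖(p.1 - p.2) * (l.map Prod.fst).prod‖
          + ‖p.2 * ((l.map Prod.fst).prod - (l.map Prod.snd).prod)‖ := norm_add_le _ _
      _ ≤ ‖p.1 - p.2‖ * ‖(l.map Prod.fst).prod‖
          + ‖p.2‖ * ‖(l.map Prod.fst).prod - (l.map Prod.snd).prod‖ := by
          gcongr <;> exact norm_mul_le _ _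
      _ ≤ ‖p.1 - p.2‖ * 1 + 1 * ((l.map fun p => ‖p.1 - p.2‖).sum) := by
          gcongr
          · exact prod_norm_le_one' _ (by
              intro x hx
              obtain ⟨q, hq, rfl⟩ := List.mem_map.mp hx
              exact h1 q (by simp [hq]))
          · exact h2 p (by simp)
          · exact ih (fun q hq => h1 q (by simp [hq])) (fun q hq => h2 q (by simp [hq]))
      _ = ‖p.1 - p.2‖ + (l.map fun p => ‖p.1 - p.2‖).sum := by ring

end Aux

/-- the parameterized circuit is `(√K / 2)`-Lipschitz in its parameters,
with respect to the spectral norm on matrices and the Euclidean norm on `ℝ^K`. -/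
theorem circuit_lipschitz {N K : ℕ}
    (V : Fin (K + 1) → Matrix (Fin (2^N)) (Fin (2^N)) ℂ)
    (hV : ∀ k, V k ∈ Matrix.unitaryGroup (Fin (2^N)) ℂ)
    (P : Fin K → Matrix (Fin (2^N)) (Fin (2^N)) ℂ)
    (hPH : ∀ k, (P k).IsHermitian)
    (hPU : ∀ k, P k ∈ Matrix.unitaryGroup (Fin (2^N)) ℂ)
    (θ₁ θ₂ : EuclideanSpace ℝ (Fin K)) :
    ‖circuit V P θ₁ - circuit V P θ₂‖ ≤ (Real.sqrt K / 2) * ‖θ₁ - θ₂‖ := by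
  haveI : Nontrivial (Matrix (Fin (2^N)) (Fin (2^N)) ℂ) := matrix_nontrivial'
  set f1 : Fin K → Matrix (Fin (2^N)) (Fin (2^N)) ℂ :=
    fun k => V k.castSucc * rotGate (P k) (θ₁ k) with hf1
  set f2 : Fin K → Matrix (Fin (2^N)) (Fin (2^N)) ℂ :=
    fun k => V k.castSucc * rotGate (P k) (θ₂ k) with hf2
  have hVlast : ‖V (Fin.last K)‖ = 1 := CStarRing.norm_of_mem_unitary (hV _)
  have hstep : circuit V P θ₁ - circuit V P θ₂
      = ((List.ofFn f1).prod - (List.ofFn f2).prod) * V (Fin.last K) := by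
    rw [circuit, circuit, Matrix.sub_mul]
  -- the telescoping bound
  have htele : ‖(List.ofFn f1).prod - (List.ofFn f2).prod‖
      ≤ ∑ k : Fin K, ‖f1 k - f2 k‖ := by
    have h := telescope' (List.ofFn fun k => (f1 k, f2 k))
      (by
        intro p hp
        obtain ⟨k, rfl⟩ := List.mem_ofFn.mp hp
        exact le_of_eq (CStarRing.norm_of_mem_unitary
          (mul_mem (hV _) (rotGate_mem' (hPH k) _))))
      (by
        intro p hp
        obtain ⟨k, rfl⟩ := List.mem_ofFn.mp hp
        exact le_of_eq (CStarRing.norm_of_mem_unitary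
          (mul_mem (hV _) (rotGate_mem' (hPH k) _))))
    simpa only [List.map_ofFn, Function.comp_def, List.sum_ofFn] using h
  -- per-gate bound
  have hgate : ∀ k : Fin K, ‖f1 k - f2 k‖ ≤ |θ₁ k - θ₂ k| / 2 := by
    intro k
    have : f1 k - f2 k = V k.castSucc * (rotGate (P k) (θ₁ k) - rotGate (P k) (θ₂ k)) := by
      rw [Matrix.mul_sub]
    rw [this]
    calc ‖V k.castSucc * (rotGate (P k) (θ₁ k) - rotGate (P k) (θ₂ k))‖
        ≤ ‖V k.castSucc‖ * ‖rotGate (P k) (θ₁ k) - rotGate (P k) (θ₂ k)‖ := norm_mul_le _ _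
      _ = ‖rotGate (P k) (θ₁ k) - rotGate (P k) (θ₂ k)‖ := by
          rw [CStarRing.norm_of_mem_unitary (hV _), one_mul]
      _ ≤ |θ₁ k - θ₂ k| / 2 := rot_diff' (hPH k) (hPU k) _ _
  -- Cauchy-Schwarz step
  have hCS : ∑ k : Fin K, |θ₁ k - θ₂ k| / 2 ≤ (Real.sqrt K / 2) * ‖θ₁ - θ₂‖ := by
    have hnorm : ‖θ₁ - θ₂‖ = Real.sqrt (∑ k : Fin K, (θ₁ k - θ₂ k)^2) := by
      rw [EuclideanSpace.norm_eq]
      congr 1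
      refine Finset.sum_congr rfl fun k _ => ?_
      rw [show (θ₁ - θ₂) k = θ₁ k - θ₂ k from rfl, Real.norm_eq_abs, sq_abs]
    have hsq : (∑ k : Fin K, |θ₁ k - θ₂ k|)^2 ≤ (K : ℝ) * ∑ k : Fin K, (θ₁ k - θ₂ k)^2 := by
      have h := sq_sum_le_card_mul_sum_sq (s := (Finset.univ : Finset (Fin K)))
        (f := fun k => |θ₁ k - θ₂ k|)
      simpa [sq_abs, Finset.card_univ] using h
    have hsum_nonneg : 0 ≤ ∑ k : Fin K, |θ₁ k - θ₂ k| :=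
      Finset.sum_nonneg fun k _ => abs_nonneg _
    have h1 : ∑ k : Fin K, |θ₁ k - θ₂ k| ≤ Real.sqrt K * ‖θ₁ - θ₂‖ := by
      rw [hnorm, ← Real.sqrt_mul (Nat.cast_nonneg K)]
      calc ∑ k : Fin K, |θ₁ k - θ₂ k|
          = Real.sqrt ((∑ k : Fin K, |θ₁ k - θ₂ k|)^2) := (Real.sqrt_sq hsum_nonneg).symm
        _ ≤ Real.sqrt ((K : ℝ) * ∑ k : Fin K, (θ₁ k - θ₂ k)^2) := Real.sqrt_le_sqrt hsq
    calc ∑ k : Fin K, |θ₁ k - θ₂ k| / 2 = (∑ k : Fin K, |θ₁ k - θ₂ k|) / 2 := by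
          rw [Finset.sum_div]
      _ ≤ (Real.sqrt K * ‖θ₁ - θ₂‖) / 2 := by linarith
      _ = (Real.sqrt K / 2) * ‖θ₁ - θ₂‖ := by ring
  calc ‖circuit V P θ₁ - circuit V P θ₂‖
      = ‖((List.ofFn f1).prod - (List.ofFn f2).prod) * V (Fin.last K)‖ := by rw [hstep]
    _ ≤ ‖(List.ofFn f1).prod - (List.ofFn f2).prod‖ * ‖V (Fin.last K)‖ := norm_mul_le _ _
    _ = ‖(List.ofFn f1).prod - (List.ofFn f2).prod‖ := by rw [hVlast, mul_one]
    _ ≤ ∑ k : Fin K, ‖f1 k - f2 k‖ := htele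
    _ ≤ ∑ k : Fin K, |θ₁ k - θ₂ k| / 2 := Finset.sum_le_sum fun k _ => hgate k
    _ ≤ (Real.sqrt K / 2) * ‖θ₁ - θ₂‖ := hCS

end
end

section
/- For any input x and any parameter vectors θ₁, θ₂ ∈ ℝ^K, the parameter-shift gradients of the QNN output satisfy ‖∇_θ f_{θ₁}(x) − ∇_θ f_{θ₂}(x)‖₂ ≤ K · ‖O‖ · ‖θ₁ − θ₂‖₂. -/
open scoped Matrix Matrix.Norms.L2Operator ComplexOrder
open Finset

noncomputable section

/-! ### Auxiliary lemmas -/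

section Aux

set_option linter.unusedSectionVars false

variable {n : Type*} [Fintype n] [DecidableEq n] [Nonempty n]

set_option maxHeartbeats 1000000 in
/-- `exp(zP) = cosh z • 1 + sinh z • P` when `P² = 1`. -/
lemma Aux.exp_smul_of_sq (P : Matrix n n ℂ) (hP : P * P = 1) (z : ℂ) :
    NormedSpace.exp (z • P) = Complex.cosh z • 1 + Complex.sinh z • P := by
  have hPe : ∀ m : ℕ, P ^ (2*m) = 1 := fun m => by rw [pow_mul, pow_two, hP, one_pow]
  have hPo : ∀ m : ℕ, P ^ (2*m+1) = P := fun m => by rw [pow_succ, hPe, one_mul]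
  rw [NormedSpace.exp_eq_tsum ℂ]
  refine HasSum.tsum_eq ?_
  have heven : HasSum (fun k : ℕ => (((2*k).factorial : ℂ))⁻¹ • (z • P) ^ (2*k))
      (Complex.cosh z • 1) := by
    have h1 := Complex.hasSum_cos' (-z * Complex.I)
    have h2 : (-z * Complex.I * Complex.I) = z := by
      rw [mul_assoc, Complex.I_mul_I]; ring
    have h3 : Complex.cos (-z * Complex.I) = Complex.cosh z := by
      rw [neg_mul, Complex.cos_neg, Complex.cos_mul_I]
    rw [h2, h3] at h1
    have := h1.smul_const (1 : Matrix n n ℂ)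
    convert this using 2 with k
    rw [smul_pow, hPe, smul_smul]
    congr 1
    rw [div_eq_mul_inv]; ring
  have hodd : HasSum (fun k : ℕ => (((2*k+1).factorial : ℂ))⁻¹ • (z • P) ^ (2*k+1))
      (Complex.sinh z • P) := by
    have h1 := Complex.hasSum_sin' (-z * Complex.I)
    have h2 : (-z * Complex.I * Complex.I) = z := by
      rw [mul_assoc, Complex.I_mul_I]; ring
    have h3 : Complex.sin (-z * Complex.I) = -(Complex.sinh z * Complex.I) := by
      rw [neg_mul, Complex.sin_neg, Complex.sin_mul_I]
    rw [h2, h3] at h1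
    have h1' := h1.mul_right Complex.I
    have h4 : -(Complex.sinh z * Complex.I) * Complex.I = Complex.sinh z := by
      rw [neg_mul, mul_assoc, Complex.I_mul_I]; ring
    rw [h4] at h1'
    have := h1'.smul_const P
    convert this using 2 with k
    rw [smul_pow, hPo, smul_smul]
    congr 1
    rw [div_mul_cancel₀ _ Complex.I_ne_zero, div_eq_mul_inv]; ring
  exact heven.even_add_odd hodd

lemma Aux.exp_I_sub_one (t : ℝ) : ‖Complex.exp (t * Complex.I) - 1‖ ≤ |t| := by
  have h1 : Complex.exp (t * Complex.I) - 1
      = ((Real.cos t - 1 : ℝ) : ℂ) + ((Real.sin t : ℝ) : ℂ) * Complex.I := by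
    rw [Complex.exp_mul_I]
    push_cast
    ring
  rw [h1, Complex.norm_def, Complex.normSq_add_mul_I]
  have h2 : (Real.cos t - 1) ^ 2 + Real.sin t ^ 2 ≤ t ^ 2 := by
    have hb := Real.one_sub_sq_div_two_le_cos (x := t)
    have key : (Real.cos t - 1) ^ 2 + Real.sin t ^ 2 = 2 - 2 * Real.cos t := by
      linear_combination Real.sin_sq_add_cos_sq t
    linarith
  calc Real.sqrt ((Real.cos t - 1) ^ 2 + Real.sin t ^ 2) ≤ Real.sqrt (t ^ 2) :=
        Real.sqrt_le_sqrt h2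
    _ = |t| := Real.sqrt_sq_eq_abs t

lemma Aux.exp_I_diff (x y : ℝ) :
    ‖Complex.exp (x * Complex.I) - Complex.exp (y * Complex.I)‖ ≤ |x - y| := by
  have hsplit : Complex.exp (x * Complex.I) =
      Complex.exp (y * Complex.I) * Complex.exp ((x - y : ℝ) * Complex.I) := by
    rw [← Complex.exp_add]; congr 1; push_cast; ring
  rw [hsplit, show Complex.exp (y * Complex.I) * Complex.exp ((x - y : ℝ) * Complex.I)
      - Complex.exp (y * Complex.I)
      = Complex.exp (y * Complex.I) * (Complex.exp ((x - y : ℝ) * Complex.I) - 1) by ring]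
  rw [norm_mul,
    Complex.norm_exp_ofReal_mul_I, one_mul]
  exact Aux.exp_I_sub_one (x - y)

lemma Aux.norm_one_matrix : ‖(1 : Matrix n n ℂ)‖ = 1 := norm_one

lemma Aux.norm_unitary {U : Matrix n n ℂ} (hU : U ∈ Matrix.unitaryGroup n ℂ) : ‖U‖ = 1 := by
  have h : Uᴴ * U = 1 := by
    have := hU.1; rwa [Matrix.star_eq_conjTranspose] at this
  have h2 : ‖U‖ * ‖U‖ = 1 := by
    rw [← Matrix.l2_opNorm_conjTranspose_mul_self, h, Aux.norm_one_matrix]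
  nlinarith [norm_nonneg U]

lemma Aux.norm_combo {P : Matrix n n ℂ} (hPH : Pᴴ = P) (hP : P * P = 1) (c d : ℂ) :
    ‖c • (1 : Matrix n n ℂ) + d • P‖ ≤ max ‖c + d‖ ‖c - d‖ := by
  have hPnorm : ‖P‖ = 1 := by
    have h2 : ‖P‖ * ‖P‖ = 1 := by
      rw [← Matrix.l2_opNorm_conjTranspose_mul_self, hPH, hP, Aux.norm_one_matrix]
    nlinarith [norm_nonneg P]
  set M : Matrix n n ℂ := c • (1 : Matrix n n ℂ) + d • P with hM
  have hMH : Mᴴ = star c • (1 : Matrix n n ℂ) + star d • P := by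
    rw [hM, Matrix.conjTranspose_add, Matrix.conjTranspose_smul, Matrix.conjTranspose_smul,
      Matrix.conjTranspose_one, hPH]
  have hexp : Mᴴ * M = (star c * c + star d * d) • (1 : Matrix n n ℂ)
      + (star c * d + star d * c) • P := by
    rw [hMH, hM]
    simp only [add_mul, mul_add, Matrix.smul_mul, Matrix.mul_smul, smul_smul, hP,
      one_mul, mul_one]
    module
  have hsq : ‖M‖ ^ 2 ≤ ‖star c * c + star d * d‖ + ‖star c * d + star d * c‖ := by
    rw [pow_two, ← Matrix.l2_opNorm_conjTranspose_mul_self, hexp]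
    calc ‖_ + _‖ ≤ ‖(star c * c + star d * d) • (1 : Matrix n n ℂ)‖
          + ‖(star c * d + star d * c) • P‖ := norm_add_le _ _
      _ = ‖star c * c + star d * d‖ + ‖star c * d + star d * c‖ := by
          rw [norm_smul, norm_smul, Aux.norm_one_matrix, hPnorm, mul_one, mul_one]
  have habs1 : ‖star c * c + star d * d‖ = Complex.normSq c + Complex.normSq d := by
    rw [mul_comm _ c, mul_comm _ d]
    rw [show c * star c = c * (starRingEnd ℂ) c from rfl,
      show d * star d = d * (starRingEnd ℂ) d from rfl,
      Complex.mul_conj, Complex.mul_conj]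
    rw [show ((Complex.normSq c : ℂ) + (Complex.normSq d : ℂ))
        = ((Complex.normSq c + Complex.normSq d : ℝ) : ℂ) by push_cast; ring]
    rw [Complex.norm_real, Real.norm_eq_abs,
      _root_.abs_of_nonneg (add_nonneg (Complex.normSq_nonneg c) (Complex.normSq_nonneg d))]
  have habs2 : ‖star c * d + star d * c‖ = 2 * |((starRingEnd ℂ) c * d).re| := by
    have hc : star d * c = (starRingEnd ℂ) ((starRingEnd ℂ) c * d) := by
      rw [map_mul, Complex.conj_conj]; exact mul_comm _ _
    rw [show star c * d = (starRingEnd ℂ) c * d from rfl, hc, Complex.add_conj]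
    rw [Complex.norm_real, Real.norm_eq_abs, abs_mul]
    norm_num
  rw [habs1, habs2] at hsq
  have hmax : Complex.normSq c + Complex.normSq d + 2 * |((starRingEnd ℂ) c * d).re|
      ≤ max ‖c + d‖ ‖c - d‖ ^ 2 := by
    rcases le_or_gt 0 (((starRingEnd ℂ) c * d).re) with h | h
    · rw [_root_.abs_of_nonneg h]
      have : ‖c + d‖ ^ 2 = Complex.normSq c + Complex.normSq d
          + 2 * (((starRingEnd ℂ) c * d).re) := by
        rw [Complex.sq_norm, Complex.normSq_add]
        congr 1
        rw [show (c * (starRingEnd ℂ) d).re = ((starRingEnd ℂ) (c * (starRingEnd ℂ) d)).re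
          from (Complex.conj_re _).symm, map_mul, Complex.conj_conj, mul_comm]
      calc _ = ‖c + d‖ ^ 2 := this.symm
        _ ≤ _ := by
            have := le_max_left ‖c + d‖ ‖c - d‖
            have h0 : (0:ℝ) ≤ ‖c + d‖ := norm_nonneg _
            nlinarith
    · rw [_root_.abs_of_neg h]
      have : ‖c - d‖ ^ 2 = Complex.normSq c + Complex.normSq d
          - 2 * (((starRingEnd ℂ) c * d).re) := by
        rw [Complex.sq_norm, Complex.normSq_sub]
        congr 1
        rw [show (c * (starRingEnd ℂ) d).re = ((starRingEnd ℂ) (c * (starRingEnd ℂ) d)).re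
          from (Complex.conj_re _).symm, map_mul, Complex.conj_conj, mul_comm]
      calc _ = ‖c - d‖ ^ 2 := by rw [this]; ring
        _ ≤ _ := by
            have := le_max_right ‖c + d‖ ‖c - d‖
            have h0 : (0:ℝ) ≤ ‖c - d‖ := norm_nonneg _
            nlinarith
  have hfin : ‖M‖ ^ 2 ≤ (max ‖c + d‖ ‖c - d‖) ^ 2 := le_trans hsq hmax
  have h0M : (0:ℝ) ≤ ‖M‖ := norm_nonneg _
  have h0m : (0:ℝ) ≤ max ‖c + d‖ ‖c - d‖ := le_max_of_le_left (norm_nonneg _)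
  nlinarith

lemma Aux.cast_helper (a : ℝ) : -(a/2 : ℂ) * Complex.I = ((-(a/2) : ℝ) : ℂ) * Complex.I := by
  push_cast; ring

lemma Aux.rot_diff_bound {P : Matrix n n ℂ} (hPH : Pᴴ = P) (hP : P * P = 1) (a b : ℝ) :
    ‖NormedSpace.exp ((-(a/2 : ℂ) * Complex.I) • P)
      - NormedSpace.exp ((-(b/2 : ℂ) * Complex.I) • P)‖ ≤ |a - b| / 2 := by
  set za : ℂ := -(a/2 : ℂ) * Complex.I with hza
  set zb : ℂ := -(b/2 : ℂ) * Complex.I with hzb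
  rw [Aux.exp_smul_of_sq P hP, Aux.exp_smul_of_sq P hP]
  have hre : (Complex.cosh za • (1 : Matrix n n ℂ) + Complex.sinh za • P)
      - (Complex.cosh zb • 1 + Complex.sinh zb • P)
      = (Complex.cosh za - Complex.cosh zb) • 1 + (Complex.sinh za - Complex.sinh zb) • P := by
    module
  rw [hre]
  refine (Aux.norm_combo hPH hP _ _).trans ?_
  have h1 : (Complex.cosh za - Complex.cosh zb) + (Complex.sinh za - Complex.sinh zb)
      = Complex.exp za - Complex.exp zb := by
    rw [← Complex.cosh_add_sinh za, ← Complex.cosh_add_sinh zb]; ring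
  have h2 : (Complex.cosh za - Complex.cosh zb) - (Complex.sinh za - Complex.sinh zb)
      = Complex.exp (-za) - Complex.exp (-zb) := by
    rw [← Complex.cosh_sub_sinh za, ← Complex.cosh_sub_sinh zb]; ring
  rw [h1, h2]
  have b1 : ‖Complex.exp za - Complex.exp zb‖ ≤ |a - b| / 2 := by
    rw [hza, hzb, Aux.cast_helper, Aux.cast_helper]
    refine (Aux.exp_I_diff (-(a/2)) (-(b/2))).trans_eq ?_
    rw [show -(a/2) - -(b/2) = (b - a)/2 by ring, abs_div, abs_sub_comm]
    norm_num
  have b2 : ‖Complex.exp (-za) - Complex.exp (-zb)‖ ≤ |a - b| / 2 := by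
    rw [hza, hzb]
    rw [show -(-(a/2 : ℂ) * Complex.I) = ((a/2 : ℝ) : ℂ) * Complex.I by push_cast; ring]
    rw [show -(-(b/2 : ℂ) * Complex.I) = ((b/2 : ℝ) : ℂ) * Complex.I by push_cast; ring]
    refine (Aux.exp_I_diff (a/2) (b/2)).trans_eq ?_
    rw [show a/2 - b/2 = (a - b)/2 by ring, abs_div]
    norm_num
  exact max_le b1 b2

lemma Aux.rot_norm_le_one {P : Matrix n n ℂ} (hPH : Pᴴ = P) (hP : P * P = 1) (a : ℝ) :
    ‖NormedSpace.exp ((-(a/2 : ℂ) * Complex.I) • P)‖ ≤ 1 := by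
  rw [Aux.exp_smul_of_sq P hP]
  refine (Aux.norm_combo hPH hP _ _).trans ?_
  have h1 : Complex.cosh (-(a/2 : ℂ) * Complex.I) + Complex.sinh (-(a/2 : ℂ) * Complex.I)
      = Complex.exp (((-(a/2) : ℝ) : ℂ) * Complex.I) := by
    rw [Complex.cosh_add_sinh, Aux.cast_helper]
  have h2 : Complex.cosh (-(a/2 : ℂ) * Complex.I) - Complex.sinh (-(a/2 : ℂ) * Complex.I)
      = Complex.exp (((a/2 : ℝ) : ℂ) * Complex.I) := by
    rw [Complex.cosh_sub_sinh]; congr 1; push_cast; ring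
  rw [h1, h2,
    Complex.norm_exp_ofReal_mul_I, Complex.norm_exp_ofReal_mul_I]
  norm_num

lemma Aux.norm_listProd_le_one : ∀ (l : List (Matrix n n ℂ)), (∀ x ∈ l, ‖x‖ ≤ 1) → ‖l.prod‖ ≤ 1
  | [], _ => by simp
  | a :: t, h => by
    rw [List.prod_cons]
    refine (Matrix.l2_opNorm_mul a t.prod).trans ?_
    have ha := h a (List.mem_cons_self)
    have ht := Aux.norm_listProd_le_one t fun x hx => h x (List.mem_cons_of_mem a hx)
    exact mul_le_one₀ ha (norm_nonneg _) ht

lemma Aux.ofFn_prod_diff : ∀ {K : ℕ} (f g : Fin K → Matrix n n ℂ),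
    (∀ k, ‖f k‖ ≤ 1) → (∀ k, ‖g k‖ ≤ 1) →
    ‖(List.ofFn f).prod - (List.ofFn g).prod‖ ≤ ∑ k, ‖f k - g k‖ := by
  intro K
  induction K with
  | zero => intro f g _ _; simp
  | succ m ih =>
    intro f g hf hg
    rw [List.ofFn_succ, List.ofFn_succ, List.prod_cons, List.prod_cons]
    have key : f 0 * (List.ofFn fun i => f i.succ).prod - g 0 * (List.ofFn fun i => g i.succ).prod
        = (f 0 - g 0) * (List.ofFn fun i => f i.succ).prod
          + g 0 * ((List.ofFn fun i => f i.succ).prod - (List.ofFn fun i => g i.succ).prod) := by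
      noncomm_ring
    rw [key, Fin.sum_univ_succ]
    have hfp : ‖(List.ofFn fun i => f i.succ).prod‖ ≤ 1 := by
      refine Aux.norm_listProd_le_one _ fun x hx => ?_
      obtain ⟨i, rfl⟩ := List.mem_ofFn.mp hx
      exact hf _
    have t1 : ‖(f 0 - g 0) * (List.ofFn fun i => f i.succ).prod‖ ≤ ‖f 0 - g 0‖ :=
      (Matrix.l2_opNorm_mul _ _).trans (by
        nlinarith [norm_nonneg (f 0 - g 0), hfp,
          norm_nonneg ((List.ofFn fun i => f i.succ).prod)])
    have t2 : ‖g 0 * ((List.ofFn fun i => f i.succ).prod - (List.ofFn fun i => g i.succ).prod)‖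
        ≤ ∑ k : Fin m, ‖f k.succ - g k.succ‖ := by
      refine (Matrix.l2_opNorm_mul _ _).trans ?_
      have := ih (fun i => f i.succ) (fun i => g i.succ) (fun k => hf _) (fun k => hg _)
      calc ‖g 0‖ * ‖(List.ofFn fun i => f i.succ).prod - (List.ofFn fun i => g i.succ).prod‖
          ≤ 1 * ‖(List.ofFn fun i => f i.succ).prod - (List.ofFn fun i => g i.succ).prod‖ :=
            mul_le_mul_of_nonneg_right (hg 0) (norm_nonneg _)
        _ = _ := one_mul _
        _ ≤ _ := this
    calc ‖_ + _‖ ≤ _ := norm_add_le _ _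
      _ ≤ ‖f 0 - g 0‖ + ∑ k : Fin m, ‖f k.succ - g k.succ‖ := add_le_add t1 t2

lemma Aux.trace_re_bound (M ρ : Matrix n n ℂ) (hρ : ρ.PosSemidef) (hρtr : ρ.trace = 1) :
    |((M * ρ).trace).re| ≤ ‖M‖ := by
  obtain ⟨B, hB⟩ := by
    open scoped MatrixOrder in exact CStarAlgebra.nonneg_iff_eq_star_mul_self.mp hρ.nonneg
  rw [Matrix.star_eq_conjTranspose] at hB
  subst hB
  set x : n → EuclideanSpace ℂ n :=
    fun i => (WithLp.equiv 2 (n → ℂ)).symm (fun k => star (B i k)) with hx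
  have htr : (M * (Bᴴ * B)).trace = (B * M * Bᴴ).trace := by
    rw [← Matrix.mul_assoc]; exact Matrix.trace_mul_cycle M Bᴴ B
  have hdiag : ∀ i, (B * M * Bᴴ) i i =
      inner (𝕜 := ℂ) (x i) ((WithLp.equiv 2 (n → ℂ)).symm (M *ᵥ (x i))) := by
    intro i
    rw [hx]
    simp only [WithLp.equiv_symm_apply, EuclideanSpace.inner_toLp_toLp, WithLp.ofLp_toLp]
    simp only [Matrix.mul_apply, Matrix.conjTranspose_apply, dotProduct,
      Matrix.mulVec, Pi.star_apply, star_star,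
      Finset.sum_mul, Finset.mul_sum]
    rw [Finset.sum_comm]
    exact Finset.sum_congr rfl fun j _ => Finset.sum_congr rfl fun k _ => by ring
  have hxnorm : ∀ i, ‖x i‖ ^ 2 = ∑ k, Complex.normSq (B i k) := by
    intro i
    rw [EuclideanSpace.norm_eq, Real.sq_sqrt (by positivity)]
    refine Finset.sum_congr rfl fun k _ => ?_
    simp [hx, Complex.sq_norm, Complex.normSq_conj]
  have hsum : ∑ i, ‖x i‖ ^ 2 = 1 := by
    have h1 : ((Bᴴ * B).trace).re = 1 := by rw [hρtr]; simp
    calc ∑ i, ‖x i‖ ^ 2 = ∑ i, ∑ k, Complex.normSq (B i k) :=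
          Finset.sum_congr rfl fun i _ => hxnorm i
      _ = ((Bᴴ * B).trace).re := by
          rw [Matrix.trace]
          simp only [Matrix.diag_apply, Matrix.mul_apply, Matrix.conjTranspose_apply,
            Complex.re_sum]
          rw [Finset.sum_comm]
          refine Finset.sum_congr rfl fun i _ => Finset.sum_congr rfl fun k _ => ?_
          rw [RCLike.star_def, mul_comm, Complex.mul_conj]
          simp
      _ = 1 := h1
  have hbound : ∀ i, ‖(B * M * Bᴴ) i i‖ ≤ ‖M‖ * ‖x i‖ ^ 2 := by
    intro i
    rw [hdiag i]
    calc ‖inner (𝕜 := ℂ) (x i) ((WithLp.equiv 2 (n → ℂ)).symm (M *ᵥ (x i)))‖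
        ≤ ‖x i‖ * ‖(WithLp.equiv 2 (n → ℂ)).symm (M *ᵥ (x i))‖ := norm_inner_le_norm _ _
      _ ≤ ‖x i‖ * (‖M‖ * ‖x i‖) :=
          mul_le_mul_of_nonneg_left (Matrix.l2_opNorm_mulVec M (x i)) (norm_nonneg _)
      _ = ‖M‖ * ‖x i‖ ^ 2 := by ring
  calc |((M * (Bᴴ * B)).trace).re| ≤ ‖(M * (Bᴴ * B)).trace‖ := Complex.abs_re_le_norm _
    _ = ‖(B * M * Bᴴ).trace‖ := by rw [htr]
    _ = ‖∑ i, (B * M * Bᴴ) i i‖ := by rw [Matrix.trace]; rfl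
    _ ≤ ∑ i, ‖(B * M * Bᴴ) i i‖ := norm_sum_le _ _
    _ ≤ ∑ i, ‖M‖ * ‖x i‖ ^ 2 := Finset.sum_le_sum fun i _ => hbound i
    _ = ‖M‖ * ∑ i, ‖x i‖ ^ 2 := by rw [Finset.mul_sum]
    _ = ‖M‖ := by rw [hsum, mul_one]

end Aux

section QNN

variable {N K : ℕ}

lemma circuit_norm_le_one
    (V : Fin (K + 1) → Matrix (Fin (2^N)) (Fin (2^N)) ℂ)
    (hV : ∀ k, V k ∈ Matrix.unitaryGroup (Fin (2^N)) ℂ)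
    (P : Fin K → Matrix (Fin (2^N)) (Fin (2^N)) ℂ)
    (hPH : ∀ k, (P k).IsHermitian)
    (hPU : ∀ k, P k ∈ Matrix.unitaryGroup (Fin (2^N)) ℂ)
    (θ : EuclideanSpace ℝ (Fin K)) :
    ‖circuit V P θ‖ ≤ 1 := by
  haveI : Nonempty (Fin (2^N)) := ⟨⟨0, pow_pos (by norm_num) N⟩⟩
  have hP2 : ∀ k, P k * P k = 1 := fun k => by
    have := (hPU k).1
    rwa [Matrix.star_eq_conjTranspose, hPH k] at this
  rw [circuit]
  refine (Matrix.l2_opNorm_mul _ _).trans ?_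
  rw [Aux.norm_unitary (hV (Fin.last K)), mul_one]
  refine Aux.norm_listProd_le_one _ fun x hx => ?_
  obtain ⟨k, rfl⟩ := List.mem_ofFn.mp hx
  refine (Matrix.l2_opNorm_mul _ _).trans ?_
  rw [Aux.norm_unitary (hV k.castSucc), one_mul]
  exact Aux.rot_norm_le_one (hPH k) (hP2 k) (θ k)

lemma circuit_diff
    (V : Fin (K + 1) → Matrix (Fin (2^N)) (Fin (2^N)) ℂ)
    (hV : ∀ k, V k ∈ Matrix.unitaryGroup (Fin (2^N)) ℂ)
    (P : Fin K → Matrix (Fin (2^N)) (Fin (2^N)) ℂ)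
    (hPH : ∀ k, (P k).IsHermitian)
    (hPU : ∀ k, P k ∈ Matrix.unitaryGroup (Fin (2^N)) ℂ)
    (θ η : EuclideanSpace ℝ (Fin K)) :
    ‖circuit V P θ - circuit V P η‖ ≤ (∑ k, |θ k - η k|) / 2 := by
  haveI : Nonempty (Fin (2^N)) := ⟨⟨0, pow_pos (by norm_num) N⟩⟩
  have hP2 : ∀ k, P k * P k = 1 := fun k => by
    have := (hPU k).1
    rwa [Matrix.star_eq_conjTranspose, hPH k] at this
  rw [circuit, circuit, ← Matrix.sub_mul]
  refine (Matrix.l2_opNorm_mul _ _).trans ?_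
  rw [Aux.norm_unitary (hV (Fin.last K)), mul_one]
  have hn : ∀ (ζ : EuclideanSpace ℝ (Fin K)) (k : Fin K),
      ‖V k.castSucc * rotGate (P k) (ζ k)‖ ≤ 1 := by
    intro ζ k
    refine (Matrix.l2_opNorm_mul _ _).trans ?_
    rw [Aux.norm_unitary (hV k.castSucc), one_mul]
    exact Aux.rot_norm_le_one (hPH k) (hP2 k) (ζ k)
  refine (Aux.ofFn_prod_diff _ _ (hn θ) (hn η)).trans ?_
  rw [Finset.sum_div]
  refine Finset.sum_le_sum fun k _ => ?_
  rw [← Matrix.mul_sub]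
  refine (Matrix.l2_opNorm_mul _ _).trans ?_
  rw [Aux.norm_unitary (hV k.castSucc), one_mul]
  exact Aux.rot_diff_bound (hPH k) (hP2 k) (θ k) (η k)

lemma qnnOut_diff
    (V : Fin (K + 1) → Matrix (Fin (2^N)) (Fin (2^N)) ℂ)
    (hV : ∀ k, V k ∈ Matrix.unitaryGroup (Fin (2^N)) ℂ)
    (P : Fin K → Matrix (Fin (2^N)) (Fin (2^N)) ℂ)
    (hPH : ∀ k, (P k).IsHermitian)
    (hPU : ∀ k, P k ∈ Matrix.unitaryGroup (Fin (2^N)) ℂ)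
    (O ρ : Matrix (Fin (2^N)) (Fin (2^N)) ℂ)
    (hρ : ρ.PosSemidef) (hρtr : ρ.trace = 1)
    (θ η : EuclideanSpace ℝ (Fin K)) :
    |qnnOut V P O ρ θ - qnnOut V P O ρ η| ≤ ‖O‖ * ∑ k, |θ k - η k| := by
  haveI : Nonempty (Fin (2^N)) := ⟨⟨0, pow_pos (by norm_num) N⟩⟩
  set Uθ := circuit V P θ with hUθ
  set Uη := circuit V P η with hUη
  have hcyc : ∀ (U : Matrix (Fin (2^N)) (Fin (2^N)) ℂ),
      (O * U * ρ * Uᴴ).trace = ((Uᴴ * O * U) * ρ).trace := by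
    intro U
    rw [Matrix.trace_mul_cycle (O * U) ρ Uᴴ, ← Matrix.mul_assoc]
  have hkey : qnnOut V P O ρ θ - qnnOut V P O ρ η
      = (((Uθᴴ * O * Uθ - Uηᴴ * O * Uη) * ρ).trace).re := by
    rw [qnnOut, qnnOut, ← hUθ, ← hUη, hcyc, hcyc, ← Complex.sub_re, ← Matrix.trace_sub,
      ← Matrix.sub_mul]
  rw [hkey]
  refine (Aux.trace_re_bound _ ρ hρ hρtr).trans ?_
  have hsplit : Uθᴴ * O * Uθ - Uηᴴ * O * Uη
      = Uθᴴ * O * (Uθ - Uη) + (Uθ - Uη)ᴴ * (O * Uη) := by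
    rw [Matrix.conjTranspose_sub]
    noncomm_ring
  rw [hsplit]
  have hUθn : ‖Uθ‖ ≤ 1 := circuit_norm_le_one V hV P hPH hPU θ
  have hUηn : ‖Uη‖ ≤ 1 := circuit_norm_le_one V hV P hPH hPU η
  have hD := circuit_diff V hV P hPH hPU θ η
  rw [← hUθ, ← hUη] at hD
  have hO0 : (0:ℝ) ≤ ‖O‖ := norm_nonneg _
  have hD0 : (0:ℝ) ≤ ‖Uθ - Uη‖ := norm_nonneg _
  have t1 : ‖Uθᴴ * O * (Uθ - Uη)‖ ≤ ‖O‖ * ‖Uθ - Uη‖ := by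
    refine (Matrix.l2_opNorm_mul _ _).trans ?_
    have : ‖Uθᴴ * O‖ ≤ ‖O‖ := by
      refine (Matrix.l2_opNorm_mul _ _).trans ?_
      rw [Matrix.l2_opNorm_conjTranspose]
      nlinarith
    exact mul_le_mul_of_nonneg_right this hD0
  have t2 : ‖(Uθ - Uη)ᴴ * (O * Uη)‖ ≤ ‖O‖ * ‖Uθ - Uη‖ := by
    refine (Matrix.l2_opNorm_mul _ _).trans ?_
    rw [Matrix.l2_opNorm_conjTranspose]
    have : ‖O * Uη‖ ≤ ‖O‖ := by
      refine (Matrix.l2_opNorm_mul _ _).trans ?_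
      nlinarith
    calc ‖Uθ - Uη‖ * ‖O * Uη‖ ≤ ‖Uθ - Uη‖ * ‖O‖ :=
          mul_le_mul_of_nonneg_left this hD0
      _ = ‖O‖ * ‖Uθ - Uη‖ := mul_comm _ _
  have hS0 : (0:ℝ) ≤ ∑ k, |θ k - η k| :=
    Finset.sum_nonneg fun k _ => abs_nonneg _
  calc ‖Uθᴴ * O * (Uθ - Uη) + (Uθ - Uη)ᴴ * (O * Uη)‖
      ≤ ‖Uθᴴ * O * (Uθ - Uη)‖ + ‖(Uθ - Uη)ᴴ * (O * Uη)‖ := norm_add_le _ _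
    _ ≤ ‖O‖ * ‖Uθ - Uη‖ + ‖O‖ * ‖Uθ - Uη‖ := add_le_add t1 t2
    _ = 2 * ‖O‖ * ‖Uθ - Uη‖ := by ring
    _ ≤ 2 * ‖O‖ * ((∑ k, |θ k - η k|) / 2) := by
        refine mul_le_mul_of_nonneg_left hD ?_
        positivity
    _ = ‖O‖ * ∑ k, |θ k - η k| := by ring

end QNN

/-- the parameter-shift gradient of the QNN output is `K‖O‖`-Lipschitz:
`‖∇_θ f_{θ₁}(x) − ∇_θ f_{θ₂}(x)‖₂ ≤ K ‖O‖ ‖θ₁ − θ₂‖₂`. -/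
theorem qnnGrad_lipschitz {N K : ℕ}
    (V : Fin (K + 1) → Matrix (Fin (2^N)) (Fin (2^N)) ℂ)
    (hV : ∀ k, V k ∈ Matrix.unitaryGroup (Fin (2^N)) ℂ)
    (P : Fin K → Matrix (Fin (2^N)) (Fin (2^N)) ℂ)
    (hPH : ∀ k, (P k).IsHermitian)
    (hPU : ∀ k, P k ∈ Matrix.unitaryGroup (Fin (2^N)) ℂ)
    (O ρ : Matrix (Fin (2^N)) (Fin (2^N)) ℂ)
    (hO : O.IsHermitian) (hρ : ρ.PosSemidef) (hρtr : ρ.trace = 1)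
    (θ₁ θ₂ : EuclideanSpace ℝ (Fin K)) :
    ‖qnnGrad V P O ρ θ₁ - qnnGrad V P O ρ θ₂‖ ≤ K * ‖O‖ * ‖θ₁ - θ₂‖ := by
  haveI : Nonempty (Fin (2^N)) := ⟨⟨0, pow_pos (by norm_num) N⟩⟩
  have hO0 : (0:ℝ) ≤ ‖O‖ := norm_nonneg _
  have hΔ0 : (0:ℝ) ≤ ‖θ₁ - θ₂‖ := norm_nonneg _
  -- ℓ¹–ℓ² comparison: ∑ |θ₁ k - θ₂ k| ≤ √K ‖θ₁ - θ₂‖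
  have hL1 : ∑ k, |θ₁ k - θ₂ k| ≤ Real.sqrt K * ‖θ₁ - θ₂‖ := by
    have hcs := Finset.sum_mul_sq_le_sq_mul_sq Finset.univ
      (fun _ : Fin K => (1:ℝ)) (fun k => |θ₁ k - θ₂ k|)
    simp only [one_pow, one_mul, Finset.sum_const, Finset.card_univ, Fintype.card_fin,
      nsmul_eq_mul, mul_one, sq_abs] at hcs
    have hnorm : ‖θ₁ - θ₂‖ = Real.sqrt (∑ k, (θ₁ k - θ₂ k) ^ 2) := by
      rw [EuclideanSpace.norm_eq]
      congr 1
      refine Finset.sum_congr rfl fun k _ => ?_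
      rw [Real.norm_eq_abs, sq_abs]
      congr 1
    have hS0 : (0:ℝ) ≤ ∑ k, |θ₁ k - θ₂ k| := Finset.sum_nonneg fun k _ => abs_nonneg _
    have : (∑ k, |θ₁ k - θ₂ k|) ^ 2 ≤ (Real.sqrt K * ‖θ₁ - θ₂‖) ^ 2 := by
      rw [mul_pow, hnorm, Real.sq_sqrt (by positivity : (0:ℝ) ≤ (K:ℝ)),
        Real.sq_sqrt (by positivity)]
      exact hcs
    have h2 : (0:ℝ) ≤ Real.sqrt K * ‖θ₁ - θ₂‖ := by positivity
    nlinarith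
  -- componentwise bound
  have hcomp : ∀ j : Fin K, |(qnnGrad V P O ρ θ₁ - qnnGrad V P O ρ θ₂) j|
      ≤ ‖O‖ * (Real.sqrt K * ‖θ₁ - θ₂‖) := by
    intro j
    have happ : (qnnGrad V P O ρ θ₁ - qnnGrad V P O ρ θ₂) j
        = ((qnnOut V P O ρ (θ₁ + (Real.pi / 2) • EuclideanSpace.single j 1)
            - qnnOut V P O ρ (θ₂ + (Real.pi / 2) • EuclideanSpace.single j 1)) / 2)
          - ((qnnOut V P O ρ (θ₁ - (Real.pi / 2) • EuclideanSpace.single j 1)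
            - qnnOut V P O ρ (θ₂ - (Real.pi / 2) • EuclideanSpace.single j 1)) / 2) := by
      simp only [qnnGrad, PiLp.sub_apply, WithLp.equiv_symm_apply, WithLp.ofLp_toLp]
      ring
    have hshift : ∀ s : EuclideanSpace ℝ (Fin K),
        |qnnOut V P O ρ (θ₁ + s) - qnnOut V P O ρ (θ₂ + s)|
          ≤ ‖O‖ * (Real.sqrt K * ‖θ₁ - θ₂‖) := by
      intro s
      refine (qnnOut_diff V hV P hPH hPU O ρ hρ hρtr _ _).trans ?_
      have heq : ∀ k : Fin K, |(θ₁ + s) k - (θ₂ + s) k| = |θ₁ k - θ₂ k| := by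
        intro k
        congr 1
        simp [PiLp.add_apply]
      rw [Finset.sum_congr rfl fun k _ => heq k]
      exact mul_le_mul_of_nonneg_left hL1 hO0
    have hshift' : ∀ s : EuclideanSpace ℝ (Fin K),
        |qnnOut V P O ρ (θ₁ - s) - qnnOut V P O ρ (θ₂ - s)|
          ≤ ‖O‖ * (Real.sqrt K * ‖θ₁ - θ₂‖) := by
      intro s
      have := hshift (-s)
      rwa [sub_eq_add_neg θ₁ s, sub_eq_add_neg θ₂ s]
    rw [happ]
    have h1 := hshift ((Real.pi / 2) • EuclideanSpace.single j 1)
    have h2 := hshift' ((Real.pi / 2) • EuclideanSpace.single j 1)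
    set a := qnnOut V P O ρ (θ₁ + (Real.pi / 2) • EuclideanSpace.single j 1)
    set b := qnnOut V P O ρ (θ₂ + (Real.pi / 2) • EuclideanSpace.single j 1)
    set c := qnnOut V P O ρ (θ₁ - (Real.pi / 2) • EuclideanSpace.single j 1)
    set d := qnnOut V P O ρ (θ₂ - (Real.pi / 2) • EuclideanSpace.single j 1)
    have habs : |(a - b) / 2 - (c - d) / 2| ≤ (|a - b| + |c - d|) / 2 := by
      rw [div_sub_div_same, abs_div]
      rw [abs_of_nonneg (by norm_num : (0:ℝ) ≤ 2)]
      gcongr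
      exact (abs_sub _ _)
    refine habs.trans ?_
    have := add_le_add h1 h2
    linarith
  -- assemble with the Euclidean norm
  have hnorm2 : ‖qnnGrad V P O ρ θ₁ - qnnGrad V P O ρ θ₂‖
      = Real.sqrt (∑ j, |(qnnGrad V P O ρ θ₁ - qnnGrad V P O ρ θ₂) j| ^ 2) := by
    rw [EuclideanSpace.norm_eq]
    congr 1
  rw [hnorm2]
  have hbd : ∑ j, |(qnnGrad V P O ρ θ₁ - qnnGrad V P O ρ θ₂) j| ^ 2
      ≤ ∑ _j : Fin K, (‖O‖ * (Real.sqrt K * ‖θ₁ - θ₂‖)) ^ 2 :=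
    Finset.sum_le_sum fun j _ => by
      have := hcomp j
      have h0 : (0:ℝ) ≤ |(qnnGrad V P O ρ θ₁ - qnnGrad V P O ρ θ₂) j| := abs_nonneg _
      nlinarith
  refine (Real.sqrt_le_sqrt hbd).trans ?_
  rw [Finset.sum_const, Finset.card_univ, Fintype.card_fin, nsmul_eq_mul]
  rw [Real.sqrt_mul (by positivity) _, Real.sqrt_sq (by positivity)]
  rw [show (Real.sqrt K) * (‖O‖ * (Real.sqrt K * ‖θ₁ - θ₂‖))
      = (Real.sqrt K * Real.sqrt K) * ‖O‖ * ‖θ₁ - θ₂‖ by ring,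
    Real.mul_self_sqrt (by positivity)]

end
end

section
/- Under Assumptions 1 and 2, for any labeled example (x, y) and any parameter vectors θ₁, θ₂ ∈ ℝ^K, the loss gradients satisfy ‖∇_θ ℓ(f_{θ₁}(x); y) − ∇_θ ℓ(f_{θ₂}(x); y)‖₂ ≤ κ · ‖θ₁ − θ₂‖₂, where κ = α_ℓ K ‖O‖ + √2 ν_ℓ K ‖O‖². -/
open scoped Matrix Matrix.Norms.L2Operator ComplexOrder
open Finset

noncomputable section

/-- Loss gradient `∇_θ ℓ(f_θ(x); y) = (∂ℓ/∂f)(f_θ(x); y) • ∇_θ f_θ(x)`, where `dℓ` is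
the derivative of the loss in its first argument and the gradient of `f` is the
parameter-shift gradient. -/
def lossGrad {N K : ℕ} {Y : Type*} (V : Fin (K + 1) → Matrix (Fin (2^N)) (Fin (2^N)) ℂ)
    (P : Fin K → Matrix (Fin (2^N)) (Fin (2^N)) ℂ)
    (O : Matrix (Fin (2^N)) (Fin (2^N)) ℂ) (dℓ : ℝ → Y → ℝ)
    (ρ : Matrix (Fin (2^N)) (Fin (2^N)) ℂ) (y : Y) (θ : EuclideanSpace ℝ (Fin K)) :
    EuclideanSpace ℝ (Fin K) :=
  dℓ (qnnOut V P O ρ θ) y • qnnGrad V P O ρ θ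

namespace QNNAux

variable {N : ℕ}

local notation "M" => Matrix (Fin (2^N)) (Fin (2^N)) ℂ

instance : NeZero (2^N) := ⟨(pow_pos (by norm_num : 0 < 2) N).ne'⟩

lemma norm_unitary {U : M} (hU : U ∈ Matrix.unitaryGroup (Fin (2^N)) ℂ) : ‖U‖ = 1 :=
  CStarRing.norm_of_mem_unitary hU

lemma dagD (P : M) (hPH : P.IsHermitian) (hP2 : P * P = 1) (c s : ℝ) :
    ((c : ℂ) • 1 - ((s : ℂ) * Complex.I) • P)ᴴ * ((c : ℂ) • 1 - ((s : ℂ) * Complex.I) • P)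
      = ((c^2 + s^2 : ℝ) : ℂ) • 1 := by
  have h1 : ((c : ℂ) • 1 - ((s : ℂ) * Complex.I) • P)ᴴ
      = (c : ℂ) • 1 + ((s : ℂ) * Complex.I) • P := by
    simp [Matrix.conjTranspose_smul, hPH.eq, Complex.conj_ofReal]
  rw [h1, add_mul, mul_sub, mul_sub]
  simp only [Matrix.smul_mul, Matrix.mul_smul, one_mul, mul_one, smul_smul, hP2]
  rw [show ((s:ℂ)*Complex.I)*((s:ℂ)*Complex.I) = -((s:ℂ)^2) by
    rw [mul_mul_mul_comm, Complex.I_mul_I]; ring]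
  rw [mul_comm ((s:ℂ)*Complex.I) (c:ℂ), sub_add_sub_cancel, ← sub_smul]
  congr 1
  push_cast
  ring

lemma norm_comb_sq (P : M) (hPH : P.IsHermitian) (hP2 : P * P = 1) (c s : ℝ) :
    ‖(c : ℂ) • (1 : M) - ((s : ℂ) * Complex.I) • P‖^2 = c^2 + s^2 := by
  have h := Matrix.l2_opNorm_conjTranspose_mul_self
    ((c : ℂ) • (1 : M) - ((s : ℂ) * Complex.I) • P)
  rw [dagD P hPH hP2 c s] at h
  rw [norm_smul, CStarRing.norm_one] at h
  rw [sq, ← h, mul_one, Complex.norm_real, Real.norm_eq_abs, abs_of_nonneg (by positivity)]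


lemma rotGate_eq (P : M) (hP2 : P * P = 1) (θ : ℝ) :
    rotGate P θ = ((Real.cos (θ/2) : ℝ) : ℂ) • (1 : M)
      - (((Real.sin (θ/2) : ℝ) : ℂ) * Complex.I) • P := by
  have hc := (Complex.hasSum_cos ((θ : ℂ)/2)).smul_const (1 : M)
  have hs := ((Complex.hasSum_sin ((θ:ℂ)/2)).mul_left (-Complex.I)).smul_const P
  have key : HasSum (fun n : ℕ => ((Nat.factorial n : ℂ))⁻¹ • ((-((θ:ℂ) / 2) * Complex.I) • P)^n)
      (Complex.cos ((θ:ℂ)/2) • (1:M) + (-Complex.I * Complex.sin ((θ:ℂ)/2)) • P) := by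
    refine HasSum.even_add_odd ?_ ?_
    · convert hc using 2 with k
      rw [smul_pow, pow_mul P, pow_two, hP2, one_pow, smul_smul]
      congr 1
      rw [mul_pow, Even.neg_pow (even_two_mul k), pow_mul Complex.I, Complex.I_sq]
      ring
    · convert hs using 2 with k
      rw [smul_pow, pow_succ P, pow_mul P, pow_two, hP2, one_pow, one_mul, smul_smul]
      congr 1
      rw [pow_succ, mul_pow, Even.neg_pow (even_two_mul k), pow_mul Complex.I, Complex.I_sq]
      ring
  rw [rotGate, NormedSpace.exp_eq_tsum (𝕂 := ℂ)]
  beta_reduce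
  rw [key.tsum_eq]
  have h2 : ((θ:ℂ)/2) = ((θ/2 : ℝ) : ℂ) := by push_cast; ring
  rw [h2, ← Complex.ofReal_cos, ← Complex.ofReal_sin, sub_eq_add_neg, ← neg_smul]
  congr 1
  ring_nf


lemma circle_ineq (x y : ℝ) :
    (Real.cos x - Real.cos y)^2 + (Real.sin x - Real.sin y)^2 ≤ (x - y)^2 := by
  have e : (Real.cos x - Real.cos y)^2 + (Real.sin x - Real.sin y)^2
      = 2 - 2 * Real.cos (x - y) := by
    rw [Real.cos_sub]
    nlinarith [Real.sin_sq_add_cos_sq x, Real.sin_sq_add_cos_sq y]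
  rw [e]
  have h1 := Real.abs_sin_half (x - y)
  have h2 : Real.sin ((x-y)/2)^2 = (1 - Real.cos (x - y))/2 := by
    rw [← sq_abs, h1, Real.sq_sqrt]
    nlinarith [Real.cos_le_one (x - y)]
  have h3 := Real.abs_sin_le_abs (x := (x-y)/2)
  have h4 : Real.sin ((x-y)/2)^2 ≤ ((x-y)/2)^2 := by
    rw [← sq_abs, ← sq_abs ((x-y)/2)]
    exact pow_le_pow_left₀ (abs_nonneg _) h3 2
  nlinarith

lemma rot_sub_rot (P : M) (hPH : P.IsHermitian) (hP2 : P * P = 1) (a b : ℝ) :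
    ‖rotGate P a - rotGate P b‖ ≤ |a - b| / 2 := by
  rw [rotGate_eq P hP2 a, rotGate_eq P hP2 b]
  have hD : (((Real.cos (a/2) : ℝ) : ℂ) • (1 : M) - (((Real.sin (a/2) : ℝ) : ℂ) * Complex.I) • P)
      - (((Real.cos (b/2) : ℝ) : ℂ) • (1 : M) - (((Real.sin (b/2) : ℝ) : ℂ) * Complex.I) • P)
      = (((Real.cos (a/2) - Real.cos (b/2) : ℝ)) : ℂ) • (1 : M)
        - ((((Real.sin (a/2) - Real.sin (b/2) : ℝ)) : ℂ) * Complex.I) • P := by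
    rw [Complex.ofReal_sub, Complex.ofReal_sub, sub_smul, sub_mul, sub_smul]
    abel
  rw [hD]
  have h2 := norm_comb_sq P hPH hP2 (Real.cos (a/2) - Real.cos (b/2))
    (Real.sin (a/2) - Real.sin (b/2))
  have h3 := circle_ineq (a/2) (b/2)
  have h4 : a/2 - b/2 = (a-b)/2 := by ring
  rw [h4] at h3
  nlinarith [norm_nonneg ((((Real.cos (a/2) - Real.cos (b/2) : ℝ)) : ℂ) • (1 : M)
    - ((((Real.sin (a/2) - Real.sin (b/2) : ℝ)) : ℂ) * Complex.I) • P),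
    abs_nonneg (a - b), sq_abs (a - b)]

lemma rot_norm (P : M) (hPH : P.IsHermitian) (hP2 : P * P = 1) (θ : ℝ) :
    ‖rotGate P θ‖ = 1 := by
  rw [rotGate_eq P hP2 θ]
  have h2 := norm_comb_sq P hPH hP2 (Real.cos (θ/2)) (Real.sin (θ/2))
  have h3 := Real.sin_sq_add_cos_sq (θ/2)
  have h5 := norm_nonneg (((Real.cos (θ/2) : ℝ) : ℂ) • (1 : M)
    - (((Real.sin (θ/2) : ℝ) : ℂ) * Complex.I) • P)
  refine le_antisymm ?_ ?_ <;> nlinarith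

lemma norm_list_prod_le_one : ∀ (l : List M), (∀ x ∈ l, ‖x‖ ≤ 1) → ‖l.prod‖ ≤ 1
  | [], _ => by simp
  | a :: t, h => by
    rw [List.prod_cons]
    calc ‖a * t.prod‖ ≤ ‖a‖ * ‖t.prod‖ := norm_mul_le _ _
      _ ≤ 1 * 1 := mul_le_mul (h a (by simp)) (norm_list_prod_le_one t fun x hx =>
            h x (by simp [hx])) (norm_nonneg _) zero_le_one
      _ = 1 := one_mul 1

lemma prod_sub_prod : ∀ {K : ℕ} (f g : Fin K → M), (∀ k, ‖f k‖ ≤ 1) → (∀ k, ‖g k‖ ≤ 1) →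
    ‖(List.ofFn f).prod - (List.ofFn g).prod‖ ≤ ∑ k, ‖f k - g k‖ := by
  intro K
  induction K with
  | zero => intro f g _ _; simp
  | succ n ih =>
    intro f g hf hg
    rw [List.ofFn_succ, List.ofFn_succ, List.prod_cons, List.prod_cons, Fin.sum_univ_succ]
    set A := (List.ofFn fun i : Fin n => f i.succ).prod with hA
    set B := (List.ofFn fun i : Fin n => g i.succ).prod with hB
    have key : f 0 * A - g 0 * B = (f 0 - g 0) * A + g 0 * (A - B) := by
      rw [sub_mul, mul_sub]; abel
    rw [key]
    have hAle : ‖A‖ ≤ 1 := norm_list_prod_le_one _ (fun x hx => by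
      obtain ⟨k, rfl⟩ := List.mem_ofFn.mp hx; exact hf _)
    calc ‖(f 0 - g 0) * A + g 0 * (A - B)‖
        ≤ ‖(f 0 - g 0) * A‖ + ‖g 0 * (A - B)‖ := norm_add_le _ _
      _ ≤ ‖f 0 - g 0‖ * ‖A‖ + ‖g 0‖ * ‖A - B‖ :=
          add_le_add (norm_mul_le _ _) (norm_mul_le _ _)
      _ ≤ ‖f 0 - g 0‖ * 1 + 1 * (∑ k : Fin n, ‖f k.succ - g k.succ‖) := by
          refine add_le_add (mul_le_mul_of_nonneg_left hAle (norm_nonneg _)) ?_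
          exact mul_le_mul (hg 0) (ih _ _ (fun k => hf k.succ) (fun k => hg k.succ))
            (norm_nonneg _) zero_le_one
      _ = ‖f 0 - g 0‖ + ∑ k : Fin n, ‖f k.succ - g k.succ‖ := by ring


open scoped MatrixOrder

lemma trace_mul_re_le (A ρ : M) (hρ : ρ.PosSemidef) :
    |((A * ρ).trace).re| ≤ ‖A‖ * (ρ.trace).re := by
  classical
  set S := CFC.sqrt ρ with hSdef
  have hS1 : S * S = ρ := CFC.sqrt_mul_sqrt_self ρ hρ.nonneg
  have hSH : S.IsHermitian := (Matrix.nonneg_iff_posSemidef.mp (CFC.sqrt_nonneg ρ)).1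
  set b : Fin (2^N) → EuclideanSpace ℂ (Fin (2^N)) :=
    fun j => (WithLp.equiv 2 (Fin (2^N) → ℂ)).symm (fun k => S k j) with hb
  set w : Fin (2^N) → EuclideanSpace ℂ (Fin (2^N)) :=
    fun j => (EuclideanSpace.equiv (Fin (2^N)) ℂ).symm (A *ᵥ (fun k => S k j)) with hw
  have hdiag : ∀ j, (S * (A * S)) j j = inner (𝕜 := ℂ) (b j) (w j) := by
    intro j
    rw [Matrix.mul_apply, PiLp.inner_apply]
    refine Finset.sum_congr rfl fun k _ => ?_
    rw [RCLike.inner_apply]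
    have h1 : (b j) k = S k j := rfl
    have h2 : (w j) k = (A * S) k j := by
      simp [hw, Matrix.mulVec, Matrix.mul_apply, dotProduct, EuclideanSpace.equiv]
    rw [h1, h2, ← hSH.apply k j]
    simp
    ring
  have habs : ∀ j, ‖(S * (A * S)) j j‖ ≤ ‖A‖ * ‖b j‖^2 := by
    intro j
    rw [hdiag j]
    calc ‖(inner (𝕜 := ℂ) (b j) (w j) : ℂ)‖ ≤ ‖b j‖ * ‖w j‖ := norm_inner_le_norm _ _
      _ ≤ ‖b j‖ * (‖A‖ * ‖b j‖) := by
          refine mul_le_mul_of_nonneg_left ?_ (norm_nonneg _)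
          exact Matrix.l2_opNorm_mulVec A (b j)
      _ = ‖A‖ * ‖b j‖^2 := by ring
  have hbsq : ∀ j, ‖b j‖^2 = ∑ k, Complex.normSq (S k j) := by
    intro j
    rw [EuclideanSpace.norm_eq, Real.sq_sqrt (by positivity)]
    refine Finset.sum_congr rfl fun k _ => ?_
    rw [show (b j) k = S k j from rfl, Complex.sq_norm]
  have hρtr : (ρ.trace).re = ∑ j, ‖b j‖^2 := by
    rw [← hS1]
    rw [Matrix.trace]
    rw [Complex.re_sum]
    refine Finset.sum_congr rfl fun j _ => ?_
    rw [hbsq j, Matrix.diag_apply, Matrix.mul_apply, Complex.re_sum]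
    refine Finset.sum_congr rfl fun k _ => ?_
    have e : S j k = star (S k j) := by rw [← hSH.apply k j, star_star]
    rw [e, mul_comm, RCLike.star_def, Complex.mul_conj, Complex.ofReal_re]
  have htr : (A * ρ).trace = (S * (A * S)).trace := by
    rw [← hS1, ← mul_assoc, Matrix.trace_mul_comm]
  calc |((A * ρ).trace).re| ≤ ‖(A * ρ).trace‖ := Complex.abs_re_le_norm _
    _ = ‖(S * (A * S)).trace‖ := by rw [htr]
    _ ≤ ∑ j, ‖(S * (A * S)) j j‖ := by
        rw [Matrix.trace]
        exact norm_sum_le _ _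
    _ ≤ ∑ j, ‖A‖ * ‖b j‖^2 := Finset.sum_le_sum fun j _ => habs j
    _ = ‖A‖ * ∑ j, ‖b j‖^2 := by rw [Finset.mul_sum]
    _ = ‖A‖ * (ρ.trace).re := by rw [hρtr]


variable {K : ℕ}

lemma hP2_of {P : Fin K → M} (hPH : ∀ k, (P k).IsHermitian) (hPU : ∀ k, P k ∈ Matrix.unitaryGroup (Fin (2^N)) ℂ)
    (k : Fin K) : P k * P k = 1 := by
  have h := Matrix.mem_unitaryGroup_iff'.mp (hPU k)
  rwa [Matrix.star_eq_conjTranspose, (hPH k).eq] at h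

lemma circuit_norm_le {V : Fin (K + 1) → M} {P : Fin K → M} (hV : ∀ k, V k ∈ Matrix.unitaryGroup (Fin (2^N)) ℂ)
    (hPH : ∀ k, (P k).IsHermitian) (hPU : ∀ k, P k ∈ Matrix.unitaryGroup (Fin (2^N)) ℂ)
    (θ : EuclideanSpace ℝ (Fin K)) : ‖circuit V P θ‖ ≤ 1 := by
  rw [circuit]
  calc ‖(List.ofFn fun k : Fin K => V k.castSucc * rotGate (P k) (θ k)).prod * V (Fin.last K)‖
      ≤ ‖(List.ofFn fun k : Fin K => V k.castSucc * rotGate (P k) (θ k)).prod‖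
        * ‖V (Fin.last K)‖ := norm_mul_le _ _
    _ ≤ 1 * 1 := by
        refine mul_le_mul ?_ (le_of_eq (norm_unitary (hV _))) (norm_nonneg _) zero_le_one
        refine norm_list_prod_le_one _ fun x hx => ?_
        obtain ⟨k, rfl⟩ := List.mem_ofFn.mp hx
        calc ‖V k.castSucc * rotGate (P k) (θ k)‖
            ≤ ‖V k.castSucc‖ * ‖rotGate (P k) (θ k)‖ := norm_mul_le _ _
          _ = 1 := by
              rw [norm_unitary (hV _), rot_norm _ (hPH k) (hP2_of hPH hPU k), one_mul]
    _ = 1 := one_mul 1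

lemma circuit_sub_le {V : Fin (K + 1) → M} {P : Fin K → M} (hV : ∀ k, V k ∈ Matrix.unitaryGroup (Fin (2^N)) ℂ)
    (hPH : ∀ k, (P k).IsHermitian) (hPU : ∀ k, P k ∈ Matrix.unitaryGroup (Fin (2^N)) ℂ)
    (θ θ' : EuclideanSpace ℝ (Fin K)) :
    ‖circuit V P θ - circuit V P θ'‖ ≤ (∑ k, |θ k - θ' k|) / 2 := by
  rw [circuit, circuit, ← sub_mul]
  have hmem : ∀ (σ : EuclideanSpace ℝ (Fin K)) (k : Fin K),
      ‖V k.castSucc * rotGate (P k) (σ k)‖ ≤ 1 := fun σ k => by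
    calc ‖V k.castSucc * rotGate (P k) (σ k)‖
        ≤ ‖V k.castSucc‖ * ‖rotGate (P k) (σ k)‖ := norm_mul_le _ _
      _ = 1 := by rw [norm_unitary (hV _), rot_norm _ (hPH k) (hP2_of hPH hPU k), one_mul]
  calc ‖((List.ofFn fun k : Fin K => V k.castSucc * rotGate (P k) (θ k)).prod
        - (List.ofFn fun k : Fin K => V k.castSucc * rotGate (P k) (θ' k)).prod)
        * V (Fin.last K)‖
      ≤ ‖(List.ofFn fun k : Fin K => V k.castSucc * rotGate (P k) (θ k)).prod
        - (List.ofFn fun k : Fin K => V k.castSucc * rotGate (P k) (θ' k)).prod‖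
          * ‖V (Fin.last K)‖ := norm_mul_le _ _
    _ = ‖(List.ofFn fun k : Fin K => V k.castSucc * rotGate (P k) (θ k)).prod
        - (List.ofFn fun k : Fin K => V k.castSucc * rotGate (P k) (θ' k)).prod‖ := by
          rw [norm_unitary (hV _), mul_one]
    _ ≤ ∑ k, ‖V k.castSucc * rotGate (P k) (θ k) - V k.castSucc * rotGate (P k) (θ' k)‖ :=
          prod_sub_prod _ _ (hmem θ) (hmem θ')
    _ ≤ ∑ k, |θ k - θ' k| / 2 := by
          refine Finset.sum_le_sum fun k _ => ?_
          rw [← mul_sub]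
          calc ‖V k.castSucc * (rotGate (P k) (θ k) - rotGate (P k) (θ' k))‖
              ≤ ‖V k.castSucc‖ * ‖rotGate (P k) (θ k) - rotGate (P k) (θ' k)‖ := norm_mul_le _ _
            _ = ‖rotGate (P k) (θ k) - rotGate (P k) (θ' k)‖ := by
                rw [norm_unitary (hV _), one_mul]
            _ ≤ |θ k - θ' k| / 2 := rot_sub_rot _ (hPH k) (hP2_of hPH hPU k) _ _
    _ = (∑ k, |θ k - θ' k|) / 2 := by rw [Finset.sum_div]

lemma qnnOut_eq {V : Fin (K + 1) → M} {P : Fin K → M} (O ρ : M) (θ : EuclideanSpace ℝ (Fin K)) :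
    qnnOut V P O ρ θ
      = ((((circuit V P θ)ᴴ * O * circuit V P θ) * ρ).trace).re := by
  rw [qnnOut, Matrix.trace_mul_comm]
  congr 2
  simp only [Matrix.mul_assoc]

lemma qnnOut_abs_le {V : Fin (K + 1) → M} {P : Fin K → M} (hV : ∀ k, V k ∈ Matrix.unitaryGroup (Fin (2^N)) ℂ)
    (hPH : ∀ k, (P k).IsHermitian) (hPU : ∀ k, P k ∈ Matrix.unitaryGroup (Fin (2^N)) ℂ)
    (O ρ : M) (hρ : ρ.PosSemidef) (hρtr : ρ.trace = 1) (θ : EuclideanSpace ℝ (Fin K)) :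
    |qnnOut V P O ρ θ| ≤ ‖O‖ := by
  rw [qnnOut_eq]
  have h := trace_mul_re_le ((circuit V P θ)ᴴ * O * circuit V P θ) ρ hρ
  rw [hρtr] at h
  simp only [Complex.one_re, mul_one] at h
  refine h.trans ?_
  calc ‖(circuit V P θ)ᴴ * O * circuit V P θ‖
      ≤ ‖(circuit V P θ)ᴴ * O‖ * ‖circuit V P θ‖ := Matrix.l2_opNorm_mul _ _
    _ ≤ ‖(circuit V P θ)ᴴ‖ * ‖O‖ * ‖circuit V P θ‖ := by
        refine mul_le_mul_of_nonneg_right (Matrix.l2_opNorm_mul _ _) (norm_nonneg _)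
    _ ≤ 1 * ‖O‖ * 1 := by
        rw [Matrix.l2_opNorm_conjTranspose]
        refine mul_le_mul (mul_le_mul_of_nonneg_right (circuit_norm_le hV hPH hPU θ)
          (norm_nonneg _)) (circuit_norm_le hV hPH hPU θ) (norm_nonneg _) ?_
        positivity
    _ = ‖O‖ := by ring

lemma qnnOut_sub_le {V : Fin (K + 1) → M} {P : Fin K → M} (hV : ∀ k, V k ∈ Matrix.unitaryGroup (Fin (2^N)) ℂ)
    (hPH : ∀ k, (P k).IsHermitian) (hPU : ∀ k, P k ∈ Matrix.unitaryGroup (Fin (2^N)) ℂ)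
    (O ρ : M) (hρ : ρ.PosSemidef) (hρtr : ρ.trace = 1) (θ θ' : EuclideanSpace ℝ (Fin K)) :
    |qnnOut V P O ρ θ - qnnOut V P O ρ θ'| ≤ ‖O‖ * ∑ k, |θ k - θ' k| := by
  set U₁ := circuit V P θ with hU₁
  set U₂ := circuit V P θ' with hU₂
  have hdiff : qnnOut V P O ρ θ - qnnOut V P O ρ θ'
      = (((U₁ᴴ * O * U₁ - U₂ᴴ * O * U₂) * ρ).trace).re := by
    rw [qnnOut_eq, qnnOut_eq, ← hU₁, ← hU₂, ← Complex.sub_re, ← Matrix.trace_sub, ← sub_mul]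
  rw [hdiff]
  have h := trace_mul_re_le (U₁ᴴ * O * U₁ - U₂ᴴ * O * U₂) ρ hρ
  rw [hρtr] at h
  simp only [Complex.one_re, mul_one] at h
  refine h.trans ?_
  have hsplit : U₁ᴴ * O * U₁ - U₂ᴴ * O * U₂
      = U₁ᴴ * O * (U₁ - U₂) + (U₁ - U₂)ᴴ * O * U₂ := by
    rw [Matrix.conjTranspose_sub]
    simp only [Matrix.mul_sub, Matrix.sub_mul]
    abel
  rw [hsplit]
  have hU1n : ‖U₁‖ ≤ 1 := circuit_norm_le hV hPH hPU θ
  have hU2n : ‖U₂‖ ≤ 1 := circuit_norm_le hV hPH hPU θ'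
  have hΔ : ‖U₁ - U₂‖ ≤ (∑ k, |θ k - θ' k|) / 2 := circuit_sub_le hV hPH hPU θ θ'
  have hO : (0:ℝ) ≤ ‖O‖ := norm_nonneg _
  have e1 : ‖U₁ᴴ * O * (U₁ - U₂)‖ ≤ ‖O‖ * ((∑ k, |θ k - θ' k|) / 2) := by
    calc ‖U₁ᴴ * O * (U₁ - U₂)‖ ≤ ‖U₁ᴴ * O‖ * ‖U₁ - U₂‖ := Matrix.l2_opNorm_mul _ _
      _ ≤ (‖U₁ᴴ‖ * ‖O‖) * ‖U₁ - U₂‖ :=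
          mul_le_mul_of_nonneg_right (Matrix.l2_opNorm_mul _ _) (norm_nonneg _)
      _ ≤ (1 * ‖O‖) * ((∑ k, |θ k - θ' k|) / 2) := by
          refine mul_le_mul ?_ hΔ (norm_nonneg _) (by positivity)
          refine mul_le_mul_of_nonneg_right ?_ hO
          rw [Matrix.l2_opNorm_conjTranspose]; exact hU1n
      _ = ‖O‖ * ((∑ k, |θ k - θ' k|) / 2) := by ring
  have e2 : ‖(U₁ - U₂)ᴴ * O * U₂‖ ≤ ‖O‖ * ((∑ k, |θ k - θ' k|) / 2) := by
    calc ‖(U₁ - U₂)ᴴ * O * U₂‖ ≤ ‖(U₁ - U₂)ᴴ * O‖ * ‖U₂‖ := Matrix.l2_opNorm_mul _ _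
      _ ≤ (‖(U₁ - U₂)ᴴ‖ * ‖O‖) * ‖U₂‖ :=
          mul_le_mul_of_nonneg_right (Matrix.l2_opNorm_mul _ _) (norm_nonneg _)
      _ ≤ (((∑ k, |θ k - θ' k|) / 2) * ‖O‖) * 1 := by
          refine mul_le_mul ?_ hU2n (norm_nonneg _) (by positivity)
          refine mul_le_mul_of_nonneg_right ?_ hO
          rw [Matrix.l2_opNorm_conjTranspose]; exact hΔ
      _ = ‖O‖ * ((∑ k, |θ k - θ' k|) / 2) := by ring
  calc ‖U₁ᴴ * O * (U₁ - U₂) + (U₁ - U₂)ᴴ * O * U₂‖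
      ≤ ‖U₁ᴴ * O * (U₁ - U₂)‖ + ‖(U₁ - U₂)ᴴ * O * U₂‖ := norm_add_le _ _
    _ ≤ ‖O‖ * ((∑ k, |θ k - θ' k|) / 2) + ‖O‖ * ((∑ k, |θ k - θ' k|) / 2) :=
        add_le_add e1 e2
    _ = ‖O‖ * ∑ k, |θ k - θ' k| := by ring


lemma sum_abs_le_sqrt {K : ℕ} (x : EuclideanSpace ℝ (Fin K)) :
    ∑ k, |x k| ≤ Real.sqrt K * ‖x‖ := by
  have h := sq_sum_le_card_mul_sum_sq (s := Finset.univ) (f := fun k : Fin K => |x k|)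
  simp only [Finset.card_univ, Fintype.card_fin, sq_abs] at h
  have hn : ‖x‖ = Real.sqrt (∑ k, (x k)^2) := by
    rw [EuclideanSpace.norm_eq]
    congr 1
    exact Finset.sum_congr rfl fun k _ => by rw [Real.norm_eq_abs, sq_abs]
  rw [hn, ← Real.sqrt_mul (by positivity)]
  have h0 : (0:ℝ) ≤ ∑ k, |x k| := Finset.sum_nonneg fun k _ => abs_nonneg _
  rw [show (∑ k, |x k|) = Real.sqrt ((∑ k, |x k|)^2) from (Real.sqrt_sq h0).symm]
  exact Real.sqrt_le_sqrt (by exact_mod_cast h)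

lemma norm_le_of_coords {K : ℕ} (x : EuclideanSpace ℝ (Fin K)) (c : ℝ) (hc : 0 ≤ c)
    (h : ∀ j, |x j| ≤ c) : ‖x‖ ≤ Real.sqrt K * c := by
  rw [EuclideanSpace.norm_eq]
  have : ∑ k, ‖x k‖^2 ≤ ∑ _k : Fin K, c^2 := by
    refine Finset.sum_le_sum fun k _ => ?_
    rw [Real.norm_eq_abs, ← sq_abs c]
    exact pow_le_pow_left₀ (abs_nonneg _) ((h k).trans (le_abs_self c)) 2
  refine (Real.sqrt_le_sqrt this).trans ?_
  rw [Finset.sum_const, Finset.card_univ, Fintype.card_fin, nsmul_eq_mul,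
    Real.sqrt_mul (by positivity), Real.sqrt_sq hc]

lemma deriv_bound {Y : Type*} (ℓ dℓ : ℝ → Y → ℝ) (α : ℝ) (hα : 0 ≤ α)
    (hLip : ∀ (y : Y) (a b : ℝ), |ℓ a y - ℓ b y| ≤ α * |a - b|)
    (hderiv : ∀ (y : Y) (a : ℝ), HasDerivAt (fun s => ℓ s y) (dℓ a y) a)
    (y : Y) (a : ℝ) : |dℓ a y| ≤ α := by
  have lips : LipschitzWith ⟨α, hα⟩ (fun s => ℓ s y) := by
    refine LipschitzWith.of_dist_le_mul fun p q => ?_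
    rw [Real.dist_eq, Real.dist_eq]
    exact hLip y p q
  have h := (hderiv y a).hasFDerivAt.le_of_lipschitz lips
  rwa [ContinuousLinearMap.norm_toSpanSingleton, Real.norm_eq_abs] at h

end QNNAux

/-- under Assumptions 1 (Lipschitzness) and 2 (smoothness), the loss gradient
is `κ`-Lipschitz in the parameters, where `κ = α K ‖O‖ + √2 ν K ‖O‖²`. -/
theorem lossGrad_lipschitz {N K : ℕ} {Y : Type*}
    (V : Fin (K + 1) → Matrix (Fin (2^N)) (Fin (2^N)) ℂ)
    (hV : ∀ k, V k ∈ Matrix.unitaryGroup (Fin (2^N)) ℂ)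
    (P : Fin K → Matrix (Fin (2^N)) (Fin (2^N)) ℂ)
    (hPH : ∀ k, (P k).IsHermitian)
    (hPU : ∀ k, P k ∈ Matrix.unitaryGroup (Fin (2^N)) ℂ)
    (O : Matrix (Fin (2^N)) (Fin (2^N)) ℂ) (hO : O.IsHermitian)
    (ℓ dℓ : ℝ → Y → ℝ) (α ν : ℝ) (hα : 0 ≤ α) (hν : 0 ≤ ν)
    -- Assumption 1: `ℓ(·; y)` is `α`-Lipschitz
    (hLip : ∀ (y : Y) (a b : ℝ), |ℓ a y - ℓ b y| ≤ α * |a - b|)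
    -- `dℓ` is the derivative of `ℓ` in its first argument
    (hderiv : ∀ (y : Y) (a : ℝ), HasDerivAt (fun s => ℓ s y) (dℓ a y) a)
    -- Assumption 2: the derivative is `ν`-Lipschitz
    (hSmooth : ∀ (y : Y) (a b : ℝ), |dℓ a y - dℓ b y| ≤ ν * |a - b|)
    (ρ : Matrix (Fin (2^N)) (Fin (2^N)) ℂ) (hρ : ρ.PosSemidef) (hρtr : ρ.trace = 1)
    (y : Y) (θ₁ θ₂ : EuclideanSpace ℝ (Fin K)) :
    ‖lossGrad V P O dℓ ρ y θ₁ - lossGrad V P O dℓ ρ y θ₂‖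
      ≤ (α * K * ‖O‖ + Real.sqrt 2 * ν * K * ‖O‖ ^ 2) * ‖θ₁ - θ₂‖ := by
  classical
  set D := ‖θ₁ - θ₂‖ with hD
  have hD0 : 0 ≤ D := norm_nonneg _
  have hO0 : (0:ℝ) ≤ ‖O‖ := norm_nonneg _
  set g := qnnGrad V P O ρ with hg
  set f := qnnOut V P O ρ with hf
  -- pointwise gradient formula
  have hgapp : ∀ (θ : EuclideanSpace ℝ (Fin K)) (j : Fin K),
      g θ j = (f (θ + (Real.pi / 2) • EuclideanSpace.single j 1)
        - f (θ - (Real.pi / 2) • EuclideanSpace.single j 1)) / 2 := fun θ j => rfl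
  -- bounds on f
  have hfb : ∀ θ, |f θ| ≤ ‖O‖ := fun θ =>
    QNNAux.qnnOut_abs_le hV hPH hPU O ρ hρ hρtr θ
  have hflip : ∀ θ θ' : EuclideanSpace ℝ (Fin K),
      |f θ - f θ'| ≤ ‖O‖ * (Real.sqrt K * ‖θ - θ'‖) := by
    intro θ θ'
    refine (QNNAux.qnnOut_sub_le hV hPH hPU O ρ hρ hρtr θ θ').trans ?_
    refine mul_le_mul_of_nonneg_left ?_ hO0
    have e : ∀ k, |θ k - θ' k| = |(θ - θ') k| := fun k => by
      simp [PiLp.sub_apply]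
    calc ∑ k, |θ k - θ' k| = ∑ k, |(θ - θ') k| := Finset.sum_congr rfl fun k _ => e k
      _ ≤ Real.sqrt K * ‖θ - θ'‖ := QNNAux.sum_abs_le_sqrt _
  -- bounds on g
  have hgb : ∀ θ (j : Fin K), |g θ j| ≤ ‖O‖ := by
    intro θ j
    rw [hgapp, abs_div]
    have h1 := hfb (θ + (Real.pi / 2) • EuclideanSpace.single j 1)
    have h2 := hfb (θ - (Real.pi / 2) • EuclideanSpace.single j 1)
    have h3 := abs_sub (f (θ + (Real.pi / 2) • EuclideanSpace.single j 1))
      (f (θ - (Real.pi / 2) • EuclideanSpace.single j 1))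
    rw [abs_two]
    linarith
  have hgd : ∀ j : Fin K, |g θ₁ j - g θ₂ j| ≤ ‖O‖ * (Real.sqrt K * D) := by
    intro j
    set s := (Real.pi / 2) • EuclideanSpace.single j (1:ℝ) with hs
    rw [hgapp, hgapp]
    have e : (f (θ₁ + s) - f (θ₁ - s)) / 2 - (f (θ₂ + s) - f (θ₂ - s)) / 2
        = ((f (θ₁ + s) - f (θ₂ + s)) - (f (θ₁ - s) - f (θ₂ - s))) / 2 := by ring
    rw [e, abs_div, abs_two]
    have h1 : |f (θ₁ + s) - f (θ₂ + s)| ≤ ‖O‖ * (Real.sqrt K * D) := by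
      have := hflip (θ₁ + s) (θ₂ + s)
      rwa [show θ₁ + s - (θ₂ + s) = θ₁ - θ₂ by abel, ← hD] at this
    have h2 : |f (θ₁ - s) - f (θ₂ - s)| ≤ ‖O‖ * (Real.sqrt K * D) := by
      have := hflip (θ₁ - s) (θ₂ - s)
      rwa [show θ₁ - s - (θ₂ - s) = θ₁ - θ₂ by abel, ← hD] at this
    have h3 := abs_sub (f (θ₁ + s) - f (θ₂ + s)) (f (θ₁ - s) - f (θ₂ - s))
    linarith
  have hgnorm : ‖g θ₂‖ ≤ Real.sqrt K * ‖O‖ :=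
    QNNAux.norm_le_of_coords _ _ hO0 (hgb θ₂)
  have hgdiff : ‖g θ₁ - g θ₂‖ ≤ Real.sqrt K * (‖O‖ * (Real.sqrt K * D)) := by
    refine QNNAux.norm_le_of_coords _ _ (by positivity) fun j => ?_
    rw [show (g θ₁ - g θ₂) j = g θ₁ j - g θ₂ j from rfl]
    exact hgd j
  set d₁ := dℓ (f θ₁) y with hd₁
  set d₂ := dℓ (f θ₂) y with hd₂
  have hd1b : |d₁| ≤ α := QNNAux.deriv_bound ℓ dℓ α hα hLip hderiv y (f θ₁)
  have hdd : |d₁ - d₂| ≤ ν * (‖O‖ * (Real.sqrt K * D)) := by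
    refine (hSmooth y (f θ₁) (f θ₂)).trans ?_
    refine mul_le_mul_of_nonneg_left ?_ hν
    have := hflip θ₁ θ₂
    rwa [← hD] at this
  have hsplit : lossGrad V P O dℓ ρ y θ₁ - lossGrad V P O dℓ ρ y θ₂
      = d₁ • (g θ₁ - g θ₂) + (d₁ - d₂) • g θ₂ := by
    rw [lossGrad, lossGrad, smul_sub, sub_smul]
    abel
  rw [hsplit]
  have hKK : Real.sqrt K * Real.sqrt K = (K:ℝ) := Real.mul_self_sqrt (Nat.cast_nonneg K)
  have h2 : (1:ℝ) ≤ Real.sqrt 2 := by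
    rw [show (1:ℝ) = Real.sqrt 1 from (Real.sqrt_one).symm]
    exact Real.sqrt_le_sqrt (by norm_num)
  have hbig : ‖d₁ • (g θ₁ - g θ₂) + (d₁ - d₂) • g θ₂‖
      ≤ α * (Real.sqrt K * (‖O‖ * (Real.sqrt K * D)))
        + (ν * (‖O‖ * (Real.sqrt K * D))) * (Real.sqrt K * ‖O‖) := by
    calc ‖d₁ • (g θ₁ - g θ₂) + (d₁ - d₂) • g θ₂‖
        ≤ ‖d₁ • (g θ₁ - g θ₂)‖ + ‖(d₁ - d₂) • g θ₂‖ := norm_add_le _ _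
      _ = |d₁| * ‖g θ₁ - g θ₂‖ + |d₁ - d₂| * ‖g θ₂‖ := by
          rw [norm_smul, norm_smul, Real.norm_eq_abs, Real.norm_eq_abs]
      _ ≤ α * (Real.sqrt K * (‖O‖ * (Real.sqrt K * D)))
          + (ν * (‖O‖ * (Real.sqrt K * D))) * (Real.sqrt K * ‖O‖) := by
          refine add_le_add (mul_le_mul hd1b hgdiff (norm_nonneg _) hα)
            (mul_le_mul hdd hgnorm (norm_nonneg _) ?_)
          positivity
  refine hbig.trans ?_
  have e : α * (Real.sqrt K * (‖O‖ * (Real.sqrt K * D)))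
      + (ν * (‖O‖ * (Real.sqrt K * D))) * (Real.sqrt K * ‖O‖)
      = α * K * ‖O‖ * D + ν * K * ‖O‖^2 * D := by
    linear_combination (α * ‖O‖ * D + ν * ‖O‖^2 * D) * hKK
  rw [e]
  have hx : 0 ≤ ν * (K:ℝ) * ‖O‖^2 * D := by positivity
  have hle : ν * (K:ℝ) * ‖O‖^2 * D ≤ Real.sqrt 2 * (ν * K * ‖O‖^2 * D) :=
    le_mul_of_one_le_left hx h2
  have erhs : (α * K * ‖O‖ + Real.sqrt 2 * ν * K * ‖O‖ ^ 2) * D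
      = α * K * ‖O‖ * D + Real.sqrt 2 * (ν * K * ‖O‖^2 * D) := by ring
  rw [erhs]
  linarith


end
end

section
/- Under Assumption 1, for any two labeled examples (x, y), (x′, y′) and any parameter vectors θ₁, θ₂ ∈ ℝ^K, the loss gradients satisfy ‖∇_θ ℓ(f_{θ₁}(x); y) − ∇_θ ℓ(f_{θ₂}(x′); y′)‖₂ ≤ 2√2 · α_ℓ · √K · ‖O‖. -/
open scoped Matrix Matrix.Norms.L2Operator ComplexOrder
open Finset

noncomputable section

lemma trace_mul_psd_bound {n : Type*} [Fintype n] [DecidableEq n]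
    (O M : Matrix n n ℂ) (hM : M.PosSemidef) :
    ‖(O * M).trace‖ ≤ ‖O‖ * M.trace.re := by
  obtain ⟨B, hB⟩ : ∃ B : Matrix n n ℂ, M = Bᴴ * B := by
    open scoped MatrixOrder in
    obtain ⟨B, hB⟩ := CStarAlgebra.nonneg_iff_eq_star_mul_self.mp hM.nonneg
    exact ⟨B, hB⟩
  have hO0 : (0:ℝ) ≤ ‖O‖ := norm_nonneg _
  have hstar : ∀ z : ℂ, (star z * z).re = ‖z‖ ^ 2 := by
    intro z
    have h : star z = starRingEnd ℂ z := rfl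
    rw [mul_comm, h, Complex.mul_conj]
    rw [Complex.normSq_eq_norm_sq, Complex.ofReal_re]
  -- rewrite the trace as a sum of diagonal entries of B * O * Bᴴ
  have htr : (O * M).trace = ∑ i, (B * O * Bᴴ) i i := by
    rw [hB, ← mul_assoc, Matrix.trace_mul_cycle, Matrix.trace]
    simp [Matrix.diag]
  -- the diagonal entries as inner products
  have key : ∀ i, ‖(B * O * Bᴴ) i i‖ ≤ ‖O‖ * ∑ k, ‖B i k‖ ^ 2 := by
    intro i
    set v : EuclideanSpace ℂ n := WithLp.toLp 2 (fun k => starRingEnd ℂ (B i k)) with hv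
    set w : EuclideanSpace ℂ n := (EuclideanSpace.equiv n ℂ).symm (O *ᵥ v) with hw
    have hwj : ∀ j, w j = ∑ k, O j k * v k := fun j => rfl
    have hdi : (B * O * Bᴴ) i i = inner (𝕜 := ℂ) v w := by
      simp only [PiLp.inner_apply, RCLike.inner_apply, hwj, hv,
        Matrix.mul_apply, Matrix.conjTranspose_apply]
      simp only [RingHom.coe_coe, starRingEnd_self_apply, Finset.mul_sum, Finset.sum_mul]
      rw [Finset.sum_comm]
      refine Finset.sum_congr rfl fun j _ => Finset.sum_congr rfl fun k _ => ?_
      rw [starRingEnd_apply, mul_assoc]; ring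
    have hvnorm : ‖v‖ ^ 2 = ∑ k, ‖B i k‖ ^ 2 := by
      rw [EuclideanSpace.norm_eq, Real.sq_sqrt (by positivity)]
      simp [hv]
    have h1 : ‖(B * O * Bᴴ) i i‖ ≤ ‖v‖ * ‖w‖ := by
      rw [hdi]
      exact norm_inner_le_norm v w
    have h2 : ‖w‖ ≤ ‖O‖ * ‖v‖ := Matrix.l2_opNorm_mulVec O v
    calc ‖(B * O * Bᴴ) i i‖ ≤ ‖v‖ * (‖O‖ * ‖v‖) :=
          h1.trans (by nlinarith [norm_nonneg v])
      _ = ‖O‖ * ‖v‖ ^ 2 := by ring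
      _ = ‖O‖ * ∑ k, ‖B i k‖ ^ 2 := by rw [hvnorm]
  have htrM : M.trace.re = ∑ i, ∑ k, ‖B i k‖ ^ 2 := by
    rw [hB, Matrix.trace]
    simp only [Matrix.diag_apply, Matrix.mul_apply, Matrix.conjTranspose_apply,
      Complex.re_sum, hstar]
    rw [Finset.sum_comm]
  calc ‖(O * M).trace‖ = ‖∑ i, (B * O * Bᴴ) i i‖ := by rw [htr]
    _ ≤ ∑ i, ‖(B * O * Bᴴ) i i‖ := by
        simpa using norm_sum_le Finset.univ (fun i => (B * O * Bᴴ) i i)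
    _ ≤ ∑ i, ‖O‖ * ∑ k, ‖B i k‖ ^ 2 := Finset.sum_le_sum fun i _ => key i
    _ = ‖O‖ * M.trace.re := by rw [htrM, Finset.mul_sum]



lemma circuit_unitary {N K : ℕ} (V : Fin (K + 1) → Matrix (Fin (2^N)) (Fin (2^N)) ℂ)
    (hV : ∀ k, V k ∈ Matrix.unitaryGroup (Fin (2^N)) ℂ)
    (P : Fin K → Matrix (Fin (2^N)) (Fin (2^N)) ℂ)
    (hPH : ∀ k, (P k).IsHermitian) (θ : EuclideanSpace ℝ (Fin K)) :
    circuit V P θ ∈ Matrix.unitaryGroup (Fin (2^N)) ℂ := by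
  have hrot : ∀ k, rotGate (P k) (θ k) ∈ Matrix.unitaryGroup (Fin (2^N)) ℂ := by
    intro k
    let +nondep : NormedAlgebra ℚ (Matrix (Fin (2^N)) (Fin (2^N)) ℂ) := .restrictScalars ℚ ℂ _
    refine NormedSpace.exp_mem_unitary_of_mem_skewAdjoint ?_
    rw [skewAdjoint.mem_iff]
    rw [Matrix.star_eq_conjTranspose, Matrix.conjTranspose_smul, (hPH k).eq]
    rw [← neg_smul]
    congr 1
    simp [Complex.ext_iff]
  refine mul_mem (Submonoid.list_prod_mem _ ?_) (hV _)
  intro x hx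
  rw [List.mem_ofFn] at hx
  obtain ⟨k, rfl⟩ := hx
  exact mul_mem (hV _) (hrot k)

lemma abs_qnnOut_le {N K : ℕ} (V : Fin (K + 1) → Matrix (Fin (2^N)) (Fin (2^N)) ℂ)
    (hV : ∀ k, V k ∈ Matrix.unitaryGroup (Fin (2^N)) ℂ)
    (P : Fin K → Matrix (Fin (2^N)) (Fin (2^N)) ℂ)
    (hPH : ∀ k, (P k).IsHermitian)
    (O ρ : Matrix (Fin (2^N)) (Fin (2^N)) ℂ)
    (hρ : ρ.PosSemidef) (hρtr : ρ.trace = 1) (θ : EuclideanSpace ℝ (Fin K)) :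
    |qnnOut V P O ρ θ| ≤ ‖O‖ := by
  set C := circuit V P θ with hC
  have hCu := circuit_unitary V hV P hPH θ
  set M := C * ρ * Cᴴ with hM
  have hMpsd : M.PosSemidef := hρ.mul_mul_conjTranspose_same C
  have hMtr : M.trace = 1 := by
    rw [hM, Matrix.trace_mul_cycle, ← Matrix.star_eq_conjTranspose]
    rw [(Matrix.mem_unitaryGroup_iff'.mp hCu)]
    simpa using hρtr
  have h1 : qnnOut V P O ρ θ = ((O * M).trace).re := by
    rw [qnnOut, hM]
    congr 2
    rw [← mul_assoc, ← mul_assoc]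
  rw [h1]
  calc |((O * M).trace).re| ≤ ‖(O * M).trace‖ := Complex.abs_re_le_norm _
    _ ≤ ‖O‖ * M.trace.re := trace_mul_psd_bound O M hMpsd
    _ = ‖O‖ := by rw [hMtr]; simp

lemma norm_qnnGrad_le {N K : ℕ} (V : Fin (K + 1) → Matrix (Fin (2^N)) (Fin (2^N)) ℂ)
    (hV : ∀ k, V k ∈ Matrix.unitaryGroup (Fin (2^N)) ℂ)
    (P : Fin K → Matrix (Fin (2^N)) (Fin (2^N)) ℂ)
    (hPH : ∀ k, (P k).IsHermitian)
    (O ρ : Matrix (Fin (2^N)) (Fin (2^N)) ℂ)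
    (hρ : ρ.PosSemidef) (hρtr : ρ.trace = 1) (θ : EuclideanSpace ℝ (Fin K)) :
    ‖qnnGrad V P O ρ θ‖ ≤ Real.sqrt K * ‖O‖ := by
  have hO0 : (0:ℝ) ≤ ‖O‖ := norm_nonneg _
  have hbound : ∀ j : Fin K, ‖qnnGrad V P O ρ θ j‖ ≤ ‖O‖ := by
    intro j
    have h1 := abs_qnnOut_le V hV P hPH O ρ hρ hρtr (θ + (Real.pi / 2) • EuclideanSpace.single j 1)
    have h2 := abs_qnnOut_le V hV P hPH O ρ hρ hρtr (θ - (Real.pi / 2) • EuclideanSpace.single j 1)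
    have : qnnGrad V P O ρ θ j
        = (qnnOut V P O ρ (θ + (Real.pi / 2) • EuclideanSpace.single j 1)
          - qnnOut V P O ρ (θ - (Real.pi / 2) • EuclideanSpace.single j 1)) / 2 := rfl
    rw [this, Real.norm_eq_abs, abs_div]
    rw [abs_of_nonneg (by norm_num : (0:ℝ) ≤ 2)]
    have := abs_sub _ _ |>.trans (add_le_add h1 h2)
    linarith [abs_sub_abs_le_abs_sub (qnnOut V P O ρ (θ + (Real.pi / 2) • EuclideanSpace.single j 1)) 0]
  rw [EuclideanSpace.norm_eq]
  have hsum : ∑ j, ‖qnnGrad V P O ρ θ j‖ ^ 2 ≤ (K : ℝ) * ‖O‖ ^ 2 := by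
    calc ∑ j, ‖qnnGrad V P O ρ θ j‖ ^ 2 ≤ ∑ _j : Fin K, ‖O‖ ^ 2 :=
          Finset.sum_le_sum fun j _ => by
            have := hbound j
            nlinarith [norm_nonneg (qnnGrad V P O ρ θ j)]
      _ = (K : ℝ) * ‖O‖ ^ 2 := by simp [mul_comm]
  calc Real.sqrt (∑ j, ‖qnnGrad V P O ρ θ j‖ ^ 2) ≤ Real.sqrt ((K:ℝ) * ‖O‖ ^ 2) :=
        Real.sqrt_le_sqrt hsum
    _ = Real.sqrt K * ‖O‖ := by
        rw [Real.sqrt_mul (Nat.cast_nonneg K), Real.sqrt_sq hO0]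

lemma abs_deriv_le_of_lipschitz {f : ℝ → ℝ} {f' a α : ℝ}
    (hL : ∀ x y, |f x - f y| ≤ α * |x - y|) (h : HasDerivAt f f' a) : |f'| ≤ α := by
  have h1 : Filter.Tendsto (slope f a) (nhdsWithin a {a}ᶜ) (nhds f') :=
    hasDerivAt_iff_tendsto_slope.mp h
  have h2 : Filter.Tendsto (fun x => |slope f a x|) (nhdsWithin a {a}ᶜ) (nhds |f'|) :=
    h1.abs
  refine le_of_tendsto h2 ?_
  filter_upwards [self_mem_nhdsWithin] with x hx
  have hxa : x ≠ a := hx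
  rw [slope_def_field, div_eq_mul_inv, abs_mul, abs_inv]
  have hpos : 0 < |x - a| := abs_pos.mpr (sub_ne_zero.mpr hxa)
  calc |f x - f a| * |x - a|⁻¹ ≤ (α * |x - a|) * |x - a|⁻¹ := by
        apply mul_le_mul_of_nonneg_right (hL x a) (by positivity)
    _ = α := by field_simp

/-- under Assumption 1 (Lipschitzness), for any two labeled examples and any
two parameter vectors, `‖∇_θ ℓ(f_{θ₁}(x); y) − ∇_θ ℓ(f_{θ₂}(x′); y′)‖₂ ≤ 2√2 α √K ‖O‖`. -/
theorem lossGrad_diff_sample_bound {N K : ℕ} {Y : Type*}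
    (V : Fin (K + 1) → Matrix (Fin (2^N)) (Fin (2^N)) ℂ)
    (hV : ∀ k, V k ∈ Matrix.unitaryGroup (Fin (2^N)) ℂ)
    (P : Fin K → Matrix (Fin (2^N)) (Fin (2^N)) ℂ)
    (hPH : ∀ k, (P k).IsHermitian)
    (hPU : ∀ k, P k ∈ Matrix.unitaryGroup (Fin (2^N)) ℂ)
    (O : Matrix (Fin (2^N)) (Fin (2^N)) ℂ) (hO : O.IsHermitian)
    (ℓ dℓ : ℝ → Y → ℝ) (α : ℝ) (hα : 0 ≤ α)
    -- Assumption 1: `ℓ(·; y)` is `α`-Lipschitz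
    (hLip : ∀ (y : Y) (a b : ℝ), |ℓ a y - ℓ b y| ≤ α * |a - b|)
    -- `dℓ` is the derivative of `ℓ` in its first argument
    (hderiv : ∀ (y : Y) (a : ℝ), HasDerivAt (fun s => ℓ s y) (dℓ a y) a)
    (ρ ρ' : Matrix (Fin (2^N)) (Fin (2^N)) ℂ)
    (hρ : ρ.PosSemidef) (hρtr : ρ.trace = 1)
    (hρ' : ρ'.PosSemidef) (hρtr' : ρ'.trace = 1)
    (y y' : Y) (θ₁ θ₂ : EuclideanSpace ℝ (Fin K)) :
    ‖lossGrad V P O dℓ ρ y θ₁ - lossGrad V P O dℓ ρ' y' θ₂‖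
      ≤ 2 * Real.sqrt 2 * α * Real.sqrt K * ‖O‖ := by
  have hO0 : (0:ℝ) ≤ ‖O‖ := norm_nonneg O
  have hK0 : (0:ℝ) ≤ Real.sqrt K := Real.sqrt_nonneg _
  have hsqrt2 : (1:ℝ) ≤ Real.sqrt 2 := by
    rw [show (1:ℝ) = Real.sqrt 1 by simp]
    exact Real.sqrt_le_sqrt (by norm_num)
  have hterm : ∀ (ρ₀ : Matrix (Fin (2^N)) (Fin (2^N)) ℂ), ρ₀.PosSemidef → ρ₀.trace = 1 →
      ∀ (y₀ : Y) (θ₀ : EuclideanSpace ℝ (Fin K)),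
      ‖lossGrad V P O dℓ ρ₀ y₀ θ₀‖ ≤ α * (Real.sqrt K * ‖O‖) := by
    intro ρ₀ hpsd htr y₀ θ₀
    have hd : |dℓ (qnnOut V P O ρ₀ θ₀) y₀| ≤ α :=
      abs_deriv_le_of_lipschitz (hLip y₀) (hderiv y₀ _)
    have hg : ‖qnnGrad V P O ρ₀ θ₀‖ ≤ Real.sqrt K * ‖O‖ :=
      norm_qnnGrad_le V hV P hPH O ρ₀ hpsd htr θ₀
    rw [lossGrad, norm_smul, Real.norm_eq_abs]
    exact mul_le_mul hd hg (norm_nonneg _) hα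
  have h1 := hterm ρ hρ hρtr y θ₁
  have h2 := hterm ρ' hρ' hρtr' y' θ₂
  calc ‖lossGrad V P O dℓ ρ y θ₁ - lossGrad V P O dℓ ρ' y' θ₂‖
      ≤ ‖lossGrad V P O dℓ ρ y θ₁‖ + ‖lossGrad V P O dℓ ρ' y' θ₂‖ := norm_sub_le _ _
    _ ≤ α * (Real.sqrt K * ‖O‖) + α * (Real.sqrt K * ‖O‖) := add_le_add h1 h2
    _ ≤ 2 * Real.sqrt 2 * α * Real.sqrt K * ‖O‖ := by
        nlinarith [mul_nonneg (mul_nonneg hα hK0) hO0]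

end
end

section
/- (Lemma C.4) Under Assumptions 1 and 2, and assuming the loss takes values in [0, M], let S and S′ be two datasets of m labeled examples differing in exactly one example, and let (θ_t) and (θ′_t) be the SGD iterates on S and S′ respectively, started from the same θ₀ and driven by the same random index sequence, for T iterations, and set δ_t = ‖θ_t − θ′_t‖₂. Then for every labeled example z = (x, y) and every t₀ ∈ {0, 1, …, m} for which the event {δ_{t₀} = 0} has positive probability: |E_A[ℓ(f_{θ_T}(x); y) − ℓ(f_{θ′_T}(x); y)]| ≤ α_ℓ √K ‖O‖ · E_A[δ_T | δ_{t₀} = 0] + t₀ M / m. -/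
open scoped Matrix Matrix.Norms.L2Operator ComplexOrder
open Finset

noncomputable section

/-- SGD iterates on the dataset `(ρS, lab)` (of `m` examples), driven by the random index
sequence `σ : Fin T → Fin m`, with step sizes `η` and initialization `θ₀`:
`θ_{t+1} = θ_t − η_t ∇_θ ℓ(f_{θ_t}(x_{i_t}); y_{i_t})`. -/
def sgdIter {N K : ℕ} {Y : Type*} (V : Fin (K + 1) → Matrix (Fin (2^N)) (Fin (2^N)) ℂ)
    (P : Fin K → Matrix (Fin (2^N)) (Fin (2^N)) ℂ)
    (O : Matrix (Fin (2^N)) (Fin (2^N)) ℂ) (dℓ : ℝ → Y → ℝ) {m : ℕ}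
    (ρS : Fin m → Matrix (Fin (2^N)) (Fin (2^N)) ℂ) (lab : Fin m → Y)
    (η : ℕ → ℝ) (θ₀ : EuclideanSpace ℝ (Fin K)) {T : ℕ} (σ : Fin T → Fin m) :
    ℕ → EuclideanSpace ℝ (Fin K)
  | 0 => θ₀
  | t + 1 =>
    if h : t < T then
      sgdIter V P O dℓ ρS lab η θ₀ σ t
        - η t • lossGrad V P O dℓ (ρS (σ ⟨t, h⟩)) (lab (σ ⟨t, h⟩))
            (sgdIter V P O dℓ ρS lab η θ₀ σ t)
    else sgdIter V P O dℓ ρS lab η θ₀ σ t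

/-- Expectation over the random index sequence `σ`, each index independently uniform
on `Fin m`. -/
def expA {T m : ℕ} (g : (Fin T → Fin m) → ℝ) : ℝ :=
  (∑ σ : Fin T → Fin m, g σ) / (m : ℝ) ^ T

section AuxLemmas

variable {d : Type*} [Fintype d] [DecidableEq d]

lemma aux_norm_one_le : ‖(1 : Matrix d d ℂ)‖ ≤ 1 := by
  have h := Matrix.l2_opNorm_conjTranspose_mul_self (1 : Matrix d d ℂ)
  rw [Matrix.conjTranspose_one, one_mul] at h
  nlinarith [norm_nonneg (1 : Matrix d d ℂ)]

lemma aux_norm_le_one {U : Matrix d d ℂ} (h : Uᴴ * U = 1) : ‖U‖ ≤ 1 := by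
  have h2 := Matrix.l2_opNorm_conjTranspose_mul_self U
  rw [h] at h2
  nlinarith [norm_nonneg U, aux_norm_one_le (d := d)]

lemma aux_trace_psd_bound (A ρ : Matrix d d ℂ) (hρ : ρ.PosSemidef) :
    ‖(A * ρ).trace‖ ≤ ‖A‖ * ρ.trace.re := by
  obtain ⟨B, rfl⟩ : ∃ B : Matrix d d ℂ, ρ = Bᴴ * B := by
    open scoped MatrixOrder in
    exact ⟨CFC.sqrt ρ, by
      rw [(Matrix.nonneg_iff_posSemidef.mp (CFC.sqrt_nonneg ρ)).isHermitian.eq,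
        CFC.sqrt_mul_sqrt_self ρ (Matrix.nonneg_iff_posSemidef.mpr hρ)]⟩
  set w : d → EuclideanSpace ℂ d :=
    fun i => (WithLp.equiv 2 (d → ℂ)).symm (fun k => star (B i k)) with hw
  have hdiag : ∀ i, (B * A * Bᴴ) i i
      = inner (𝕜 := ℂ) (w i) ((EuclideanSpace.equiv d ℂ).symm (A *ᵥ fun k => star (B i k))) := by
    intro i
    have hcast : ((EuclideanSpace.equiv d ℂ).symm (A *ᵥ fun k => star (B i k)) : EuclideanSpace ℂ d)
        = (WithLp.equiv 2 (d → ℂ)).symm (A *ᵥ fun k => star (B i k)) := rfl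
    rw [hcast]
    simp only [Matrix.mul_apply, Matrix.conjTranspose_apply, PiLp.inner_apply, hw,
      WithLp.equiv_symm_apply, WithLp.ofLp_toLp, Matrix.mulVec, dotProduct, RCLike.inner_apply,
      starRingEnd_apply, star_star, Finset.mul_sum, Finset.sum_mul]
    rw [Finset.sum_comm]
    exact Finset.sum_congr rfl fun j _ => Finset.sum_congr rfl fun k _ => by ring
  have htr : (A * (Bᴴ * B)).trace = ∑ i, (B * A * Bᴴ) i i := by
    rw [← mul_assoc, Matrix.trace_mul_cycle A Bᴴ B]
    rfl
  have hwnorm : ∀ i, ‖w i‖ ^ 2 = ∑ k, Complex.normSq (B i k) := by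
    intro i
    rw [EuclideanSpace.norm_eq, Real.sq_sqrt (by positivity)]
    refine Finset.sum_congr rfl fun k _ => ?_
    simp only [hw, WithLp.equiv_symm_apply, WithLp.ofLp_toLp, norm_star, Complex.sq_norm]
  have hkey : ∀ z : ℂ, (star z * z).re = Complex.normSq z := fun z => by
    rw [mul_comm, show (star z) = (starRingEnd ℂ) z from rfl, Complex.mul_conj,
      Complex.ofReal_re]
  have htrre : (Bᴴ * B).trace.re = ∑ i, ‖w i‖ ^ 2 := by
    calc (Bᴴ * B).trace.re = ∑ k, ∑ i, (star (B i k) * B i k).re := by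
          simp only [Matrix.trace, Matrix.diag, Matrix.mul_apply, Matrix.conjTranspose_apply,
            Complex.re_sum]
      _ = ∑ i, ∑ k, Complex.normSq (B i k) := by
          rw [Finset.sum_comm]
          exact Finset.sum_congr rfl fun i _ => Finset.sum_congr rfl fun k _ => hkey _
      _ = ∑ i, ‖w i‖ ^ 2 := by
          exact Finset.sum_congr rfl fun i _ => (hwnorm i).symm
  calc ‖(A * (Bᴴ * B)).trace‖ = ‖∑ i, (B * A * Bᴴ) i i‖ := by
        rw [htr]
    _ ≤ ∑ i, ‖(B * A * Bᴴ) i i‖ := norm_sum_le _ _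
    _ ≤ ∑ i, ‖A‖ * ‖w i‖ ^ 2 := by
        refine Finset.sum_le_sum fun i _ => ?_
        rw [hdiag i]
        calc ‖inner (𝕜 := ℂ) (w i) ((EuclideanSpace.equiv d ℂ).symm (A *ᵥ fun k => star (B i k)))‖
            ≤ ‖w i‖ * ‖(EuclideanSpace.equiv d ℂ).symm (A *ᵥ fun k => star (B i k))‖ :=
              norm_inner_le_norm _ _
          _ ≤ ‖w i‖ * (‖A‖ * ‖w i‖) := by
              refine mul_le_mul_of_nonneg_left ?_ (norm_nonneg _)
              exact Matrix.l2_opNorm_mulVec A (w i)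
          _ = ‖A‖ * ‖w i‖ ^ 2 := by ring
    _ = ‖A‖ * (Bᴴ * B).trace.re := by rw [htrre, Finset.mul_sum]

lemma aux_qnn_trace_diff (O ρ U U' : Matrix d d ℂ) (hρ : ρ.PosSemidef) (hρt : ρ.trace = 1)
    (hU : ‖U‖ ≤ 1) (hU' : ‖U'‖ ≤ 1) :
    |((O * U * ρ * Uᴴ).trace).re - ((O * U' * ρ * U'ᴴ).trace).re| ≤ 2 * ‖O‖ * ‖U - U'‖ := by
  have hcycle : ∀ W : Matrix d d ℂ, (O * W * ρ * Wᴴ).trace = ((Wᴴ * O * W) * ρ).trace := by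
    intro W
    rw [Matrix.trace_mul_cycle (O * W) ρ Wᴴ, ← mul_assoc, mul_assoc Wᴴ O W]
  set D := U - U' with hD
  have hsplit : Uᴴ * O * U - U'ᴴ * O * U' = Dᴴ * O * U + U'ᴴ * O * D := by
    rw [hD, Matrix.conjTranspose_sub]
    noncomm_ring
  have h1 : ‖((Dᴴ * O * U) * ρ).trace‖ ≤ ‖D‖ * ‖O‖ := by
    calc ‖((Dᴴ * O * U) * ρ).trace‖ ≤ ‖Dᴴ * O * U‖ * ρ.trace.re :=
          aux_trace_psd_bound _ _ hρ
      _ ≤ ‖D‖ * ‖O‖ := by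
          rw [hρt]
          simp only [Complex.one_re, mul_one]
          calc ‖Dᴴ * O * U‖ ≤ ‖Dᴴ * O‖ * ‖U‖ := norm_mul_le _ _
            _ ≤ ‖Dᴴ * O‖ := by
                nlinarith [norm_nonneg (Dᴴ * O), norm_nonneg U]
            _ ≤ ‖Dᴴ‖ * ‖O‖ := norm_mul_le _ _
            _ = ‖D‖ * ‖O‖ := by rw [Matrix.l2_opNorm_conjTranspose]
  have h2 : ‖((U'ᴴ * O * D) * ρ).trace‖ ≤ ‖D‖ * ‖O‖ := by
    calc ‖((U'ᴴ * O * D) * ρ).trace‖ ≤ ‖U'ᴴ * O * D‖ * ρ.trace.re :=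
          aux_trace_psd_bound _ _ hρ
      _ ≤ ‖D‖ * ‖O‖ := by
          rw [hρt]
          simp only [Complex.one_re, mul_one]
          calc ‖U'ᴴ * O * D‖ ≤ ‖U'ᴴ * O‖ * ‖D‖ := norm_mul_le _ _
            _ ≤ (‖U'ᴴ‖ * ‖O‖) * ‖D‖ := by
                exact mul_le_mul_of_nonneg_right (norm_mul_le _ _) (norm_nonneg _)
            _ ≤ (1 * ‖O‖) * ‖D‖ := by
                rw [Matrix.l2_opNorm_conjTranspose]
                exact mul_le_mul_of_nonneg_right
                  (mul_le_mul_of_nonneg_right hU' (norm_nonneg _)) (norm_nonneg _)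
            _ = ‖D‖ * ‖O‖ := by ring
  have hdiff : ((O * U * ρ * Uᴴ).trace) - ((O * U' * ρ * U'ᴴ).trace)
      = ((Dᴴ * O * U) * ρ).trace + ((U'ᴴ * O * D) * ρ).trace := by
    rw [hcycle U, hcycle U', ← Matrix.trace_sub, ← Matrix.sub_mul, hsplit, Matrix.add_mul,
      Matrix.trace_add]
  calc |((O * U * ρ * Uᴴ).trace).re - ((O * U' * ρ * U'ᴴ).trace).re|
      = |(((O * U * ρ * Uᴴ).trace) - ((O * U' * ρ * U'ᴴ).trace)).re| := by
        rw [Complex.sub_re]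
    _ ≤ ‖((O * U * ρ * Uᴴ).trace) - ((O * U' * ρ * U'ᴴ).trace)‖ :=
        Complex.abs_re_le_norm _
    _ ≤ ‖((Dᴴ * O * U) * ρ).trace‖ + ‖((U'ᴴ * O * D) * ρ).trace‖ := by
        rw [hdiff]; exact norm_add_le _ _
    _ ≤ ‖D‖ * ‖O‖ + ‖D‖ * ‖O‖ := add_le_add h1 h2
    _ = 2 * ‖O‖ * ‖U - U'‖ := by rw [hD]; ring

end AuxLemmas

section AuxLemmas2

variable {d : Type*} [Fintype d] [DecidableEq d]

lemma aux_exp_unitary {A : Matrix d d ℂ} (hA : Aᴴ = -A) :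
    (NormedSpace.exp A)ᴴ * NormedSpace.exp A = 1 := by
  rw [← Matrix.exp_conjTranspose, hA, ← Matrix.exp_add_of_commute (-A) A
    ((Commute.refl A).neg_left), neg_add_cancel, NormedSpace.exp_zero]

lemma aux_rotGate_lip {N : ℕ} (P : Matrix (Fin (2^N)) (Fin (2^N)) ℂ) (hPH : P.IsHermitian)
    (hPU : P ∈ Matrix.unitaryGroup (Fin (2^N)) ℂ) (a b : ℝ) :
    ‖rotGate P a - rotGate P b‖ ≤ |a - b| / 2 := by
  set A : Matrix (Fin (2^N)) (Fin (2^N)) ℂ := ((-(1:ℂ)/2) * Complex.I) • P with hA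
  have hnormP : ‖P‖ ≤ 1 := by
    apply aux_norm_le_one
    have := hPU.1
    rwa [Matrix.star_eq_conjTranspose] at this
  have hnormA : ‖A‖ ≤ 1 / 2 := by
    rw [hA, norm_smul]
    have h1 : ‖(-(1:ℂ)/2) * Complex.I‖ = 1 / 2 := by
      simp [norm_mul]
    rw [h1]
    nlinarith [norm_nonneg P]
  have hskew : ∀ s : ℝ, ((s : ℂ) • A)ᴴ = -((s : ℂ) • A) := by
    intro s
    rw [Matrix.conjTranspose_smul, hA, Matrix.conjTranspose_smul, hPH.eq]
    rw [← smul_assoc, ← neg_smul, ← smul_assoc]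
    congr 1
    simp [Complex.ext_iff]
  have hrot : ∀ θ : ℝ, rotGate P θ = NormedSpace.exp ((θ : ℂ) • A) := by
    intro θ
    rw [rotGate, hA, smul_smul]
    congr 2
    ring
  have hexpnorm : ∀ s : ℝ, ‖NormedSpace.exp ((s : ℂ) • A)‖ ≤ 1 := fun s =>
    aux_norm_le_one (aux_exp_unitary (hskew s))
  have hg : ∀ s : ℝ, HasDerivAt (fun u : ℝ => NormedSpace.exp ((u : ℂ) • A))
      (NormedSpace.exp ((s : ℂ) • A) * A) s := by
    intro s
    have h1 : HasDerivAt (fun u : ℂ => NormedSpace.exp (u • A))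
        (NormedSpace.exp ((s : ℂ) • A) * A) (s : ℂ) := hasDerivAt_exp_smul_const A (s : ℂ)
    have h2 : HasDerivAt (fun y : ℝ => (y : ℂ)) 1 s := by
      exact (hasDerivAt_id s).ofReal_comp
    have := HasDerivAt.scomp (x := s) h1 h2
    rw [one_smul] at this
    exact this
  have key : ∀ x y : ℝ, ‖(fun u : ℝ => NormedSpace.exp ((u : ℂ) • A)) y
      - (fun u : ℝ => NormedSpace.exp ((u : ℂ) • A)) x‖ ≤ (1/2) * ‖y - x‖ := by
    intro x y
    refine Convex.norm_image_sub_le_of_norm_hasDerivWithin_le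
      (f := fun u : ℝ => NormedSpace.exp ((u : ℂ) • A))
      (f' := fun s : ℝ => NormedSpace.exp ((s : ℂ) • A) * A) (s := Set.univ)
      (fun s _ => (hg s).hasDerivWithinAt) (fun s _ => ?_) convex_univ (Set.mem_univ x)
      (Set.mem_univ y)
    calc ‖NormedSpace.exp ((s : ℂ) • A) * A‖
        ≤ ‖NormedSpace.exp ((s : ℂ) • A)‖ * ‖A‖ := norm_mul_le _ _
      _ ≤ 1 * (1/2) := mul_le_mul (hexpnorm s) hnormA (norm_nonneg _)
          (le_trans (norm_nonneg _) (hexpnorm s))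
      _ = 1/2 := by norm_num
  have := key b a
  rw [hrot a, hrot b]
  calc ‖NormedSpace.exp ((a : ℂ) • A) - NormedSpace.exp ((b : ℂ) • A)‖
      ≤ (1/2) * ‖a - b‖ := this
    _ = |a - b| / 2 := by rw [Real.norm_eq_abs]; ring

lemma aux_rotGate_unitary {N : ℕ} (P : Matrix (Fin (2^N)) (Fin (2^N)) ℂ) (hPH : P.IsHermitian)
    (θ : ℝ) : (rotGate P θ)ᴴ * rotGate P θ = 1 := by
  apply aux_exp_unitary
  rw [Matrix.conjTranspose_smul, hPH.eq, ← neg_smul]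
  congr 1
  simp [Complex.ext_iff]

lemma aux_norm_listprod_le : ∀ {K : ℕ} (a : Fin K → Matrix d d ℂ), (∀ k, ‖a k‖ ≤ 1) →
    ‖(List.ofFn a).prod‖ ≤ 1 := by
  intro K
  induction K with
  | zero => intro a _; simpa using aux_norm_one_le (d := d)
  | succ n ih =>
    intro a ha
    rw [List.ofFn_succ, List.prod_cons]
    calc ‖a 0 * (List.ofFn fun i : Fin n => a i.succ).prod‖
        ≤ ‖a 0‖ * ‖(List.ofFn fun i : Fin n => a i.succ).prod‖ := norm_mul_le _ _
      _ ≤ 1 := mul_le_one₀ (ha 0) (norm_nonneg _) (ih _ fun k => ha k.succ)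

lemma aux_listprod_diff : ∀ {K : ℕ} (a b : Fin K → Matrix d d ℂ),
    (∀ k, ‖a k‖ ≤ 1) → (∀ k, ‖b k‖ ≤ 1) →
    ‖(List.ofFn a).prod - (List.ofFn b).prod‖ ≤ ∑ k, ‖a k - b k‖ := by
  intro K
  induction K with
  | zero => intro a b _ _; simp
  | succ n ih =>
    intro a b ha hb
    rw [List.ofFn_succ, List.ofFn_succ, List.prod_cons, List.prod_cons]
    have expand : a 0 * (List.ofFn fun i : Fin n => a i.succ).prod
        - b 0 * (List.ofFn fun i : Fin n => b i.succ).prod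
        = (a 0 - b 0) * (List.ofFn fun i : Fin n => a i.succ).prod
          + b 0 * ((List.ofFn fun i : Fin n => a i.succ).prod
            - (List.ofFn fun i : Fin n => b i.succ).prod) := by
      noncomm_ring
    rw [expand, Fin.sum_univ_succ]
    calc ‖(a 0 - b 0) * (List.ofFn fun i : Fin n => a i.succ).prod
          + b 0 * ((List.ofFn fun i : Fin n => a i.succ).prod
            - (List.ofFn fun i : Fin n => b i.succ).prod)‖
        ≤ ‖(a 0 - b 0) * (List.ofFn fun i : Fin n => a i.succ).prod‖
          + ‖b 0 * ((List.ofFn fun i : Fin n => a i.succ).prod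
            - (List.ofFn fun i : Fin n => b i.succ).prod)‖ := norm_add_le _ _
      _ ≤ ‖a 0 - b 0‖ * 1 + 1 * ∑ k : Fin n, ‖a k.succ - b k.succ‖ := by
          refine add_le_add ?_ ?_
          · calc ‖(a 0 - b 0) * (List.ofFn fun i : Fin n => a i.succ).prod‖
                ≤ ‖a 0 - b 0‖ * ‖(List.ofFn fun i : Fin n => a i.succ).prod‖ := norm_mul_le _ _
              _ ≤ ‖a 0 - b 0‖ * 1 := mul_le_mul_of_nonneg_left
                  (aux_norm_listprod_le _ fun k => ha k.succ) (norm_nonneg _)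
          · calc ‖b 0 * ((List.ofFn fun i : Fin n => a i.succ).prod
                  - (List.ofFn fun i : Fin n => b i.succ).prod)‖
                ≤ ‖b 0‖ * ‖(List.ofFn fun i : Fin n => a i.succ).prod
                  - (List.ofFn fun i : Fin n => b i.succ).prod‖ := norm_mul_le _ _
              _ ≤ 1 * ∑ k : Fin n, ‖a k.succ - b k.succ‖ := by
                  refine mul_le_mul (hb 0) (ih _ _ (fun k => ha k.succ) (fun k => hb k.succ))
                    (norm_nonneg _) zero_le_one
      _ = ‖a 0 - b 0‖ + ∑ i : Fin n, ‖a i.succ - b i.succ‖ := by ring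

end AuxLemmas2

section AuxLemmas3

lemma aux_circuit_norm_le {N K : ℕ} (V : Fin (K + 1) → Matrix (Fin (2^N)) (Fin (2^N)) ℂ)
    (hV : ∀ k, V k ∈ Matrix.unitaryGroup (Fin (2^N)) ℂ)
    (P : Fin K → Matrix (Fin (2^N)) (Fin (2^N)) ℂ)
    (hPH : ∀ k, (P k).IsHermitian) (θ : EuclideanSpace ℝ (Fin K)) :
    ‖circuit V P θ‖ ≤ 1 := by
  have hVn : ∀ k, ‖V k‖ ≤ 1 := fun k => aux_norm_le_one
    (by simpa [Matrix.star_eq_conjTranspose] using (hV k).1)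
  have hfac : ∀ k : Fin K, ‖V k.castSucc * rotGate (P k) (θ k)‖ ≤ 1 := by
    intro k
    calc ‖V k.castSucc * rotGate (P k) (θ k)‖
        ≤ ‖V k.castSucc‖ * ‖rotGate (P k) (θ k)‖ := norm_mul_le _ _
      _ ≤ 1 := mul_le_one₀ (hVn _) (norm_nonneg _)
          (aux_norm_le_one (aux_rotGate_unitary _ (hPH k) _))
  calc ‖circuit V P θ‖
      ≤ ‖(List.ofFn fun k : Fin K => V k.castSucc * rotGate (P k) (θ k)).prod‖
        * ‖V (Fin.last K)‖ := norm_mul_le _ _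
    _ ≤ 1 := mul_le_one₀ (aux_norm_listprod_le _ hfac) (norm_nonneg _) (hVn _)

lemma aux_circuit_lip {N K : ℕ} (V : Fin (K + 1) → Matrix (Fin (2^N)) (Fin (2^N)) ℂ)
    (hV : ∀ k, V k ∈ Matrix.unitaryGroup (Fin (2^N)) ℂ)
    (P : Fin K → Matrix (Fin (2^N)) (Fin (2^N)) ℂ)
    (hPH : ∀ k, (P k).IsHermitian) (hPU : ∀ k, P k ∈ Matrix.unitaryGroup (Fin (2^N)) ℂ)
    (θ θ' : EuclideanSpace ℝ (Fin K)) :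
    ‖circuit V P θ - circuit V P θ'‖ ≤ (∑ k, |θ k - θ' k|) / 2 := by
  have hVn : ∀ k, ‖V k‖ ≤ 1 := fun k => aux_norm_le_one
    (by simpa [Matrix.star_eq_conjTranspose] using (hV k).1)
  have hfac : ∀ (ψ : EuclideanSpace ℝ (Fin K)) (k : Fin K),
      ‖V k.castSucc * rotGate (P k) (ψ k)‖ ≤ 1 := by
    intro ψ k
    calc ‖V k.castSucc * rotGate (P k) (ψ k)‖
        ≤ ‖V k.castSucc‖ * ‖rotGate (P k) (ψ k)‖ := norm_mul_le _ _
      _ ≤ 1 := mul_le_one₀ (hVn _) (norm_nonneg _)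
          (aux_norm_le_one (aux_rotGate_unitary _ (hPH k) _))
  rw [circuit, circuit, ← Matrix.sub_mul]
  calc ‖((List.ofFn fun k : Fin K => V k.castSucc * rotGate (P k) (θ k)).prod
        - (List.ofFn fun k : Fin K => V k.castSucc * rotGate (P k) (θ' k)).prod)
        * V (Fin.last K)‖
      ≤ ‖(List.ofFn fun k : Fin K => V k.castSucc * rotGate (P k) (θ k)).prod
        - (List.ofFn fun k : Fin K => V k.castSucc * rotGate (P k) (θ' k)).prod‖
        * ‖V (Fin.last K)‖ := norm_mul_le _ _
    _ ≤ ‖(List.ofFn fun k : Fin K => V k.castSucc * rotGate (P k) (θ k)).prod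
        - (List.ofFn fun k : Fin K => V k.castSucc * rotGate (P k) (θ' k)).prod‖ * 1 :=
        mul_le_mul_of_nonneg_left (hVn _) (norm_nonneg _)
    _ ≤ (∑ k : Fin K, ‖V k.castSucc * rotGate (P k) (θ k)
          - V k.castSucc * rotGate (P k) (θ' k)‖) * 1 := by
        refine mul_le_mul_of_nonneg_right
          (aux_listprod_diff _ _ (hfac θ) (hfac θ')) zero_le_one
    _ ≤ (∑ k : Fin K, |θ k - θ' k| / 2) * 1 := by
        refine mul_le_mul_of_nonneg_right (Finset.sum_le_sum fun k _ => ?_) zero_le_one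
        rw [← Matrix.mul_sub]
        calc ‖V k.castSucc * (rotGate (P k) (θ k) - rotGate (P k) (θ' k))‖
            ≤ ‖V k.castSucc‖ * ‖rotGate (P k) (θ k) - rotGate (P k) (θ' k)‖ := norm_mul_le _ _
          _ ≤ 1 * (|θ k - θ' k| / 2) := mul_le_mul (hVn _)
              (aux_rotGate_lip _ (hPH k) (hPU k) _ _) (norm_nonneg _) zero_le_one
          _ = |θ k - θ' k| / 2 := one_mul _
    _ = (∑ k, |θ k - θ' k|) / 2 := by rw [mul_one, Finset.sum_div]

lemma aux_sum_abs_le_sqrt {K : ℕ} (x : EuclideanSpace ℝ (Fin K)) :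
    ∑ k, |x k| ≤ Real.sqrt K * ‖x‖ := by
  have hnorm : ‖x‖ = Real.sqrt (∑ k, x k ^ 2) := by
    rw [EuclideanSpace.norm_eq]
    congr 1
    exact Finset.sum_congr rfl fun k _ => by rw [Real.norm_eq_abs, sq_abs]
  have hcs : (∑ k, |x k|) ^ 2 ≤ (K : ℝ) * ∑ k, x k ^ 2 := by
    have := sq_sum_le_card_mul_sum_sq (s := (Finset.univ : Finset (Fin K)))
      (f := fun k => |x k|)
    simpa [sq_abs] using this
  calc ∑ k, |x k| = Real.sqrt ((∑ k, |x k|) ^ 2) := by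
        rw [Real.sqrt_sq (Finset.sum_nonneg fun k _ => abs_nonneg _)]
    _ ≤ Real.sqrt ((K : ℝ) * ∑ k, x k ^ 2) := Real.sqrt_le_sqrt hcs
    _ = Real.sqrt K * ‖x‖ := by
        rw [Real.sqrt_mul (Nat.cast_nonneg K), hnorm]

lemma aux_qnnOut_lip {N K : ℕ} (V : Fin (K + 1) → Matrix (Fin (2^N)) (Fin (2^N)) ℂ)
    (hV : ∀ k, V k ∈ Matrix.unitaryGroup (Fin (2^N)) ℂ)
    (P : Fin K → Matrix (Fin (2^N)) (Fin (2^N)) ℂ)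
    (hPH : ∀ k, (P k).IsHermitian) (hPU : ∀ k, P k ∈ Matrix.unitaryGroup (Fin (2^N)) ℂ)
    (O ρ : Matrix (Fin (2^N)) (Fin (2^N)) ℂ) (hρ : ρ.PosSemidef) (hρt : ρ.trace = 1)
    (θ θ' : EuclideanSpace ℝ (Fin K)) :
    |qnnOut V P O ρ θ - qnnOut V P O ρ θ'| ≤ Real.sqrt K * ‖O‖ * ‖θ - θ'‖ := by
  calc |qnnOut V P O ρ θ - qnnOut V P O ρ θ'|
      ≤ 2 * ‖O‖ * ‖circuit V P θ - circuit V P θ'‖ :=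
        aux_qnn_trace_diff O ρ _ _ hρ hρt (aux_circuit_norm_le V hV P hPH θ)
          (aux_circuit_norm_le V hV P hPH θ')
    _ ≤ 2 * ‖O‖ * ((∑ k, |θ k - θ' k|) / 2) := by
        refine mul_le_mul_of_nonneg_left (aux_circuit_lip V hV P hPH hPU θ θ') ?_
        positivity
    _ = ‖O‖ * ∑ k, |θ k - θ' k| := by ring
    _ ≤ ‖O‖ * (Real.sqrt K * ‖θ - θ'‖) := by
        refine mul_le_mul_of_nonneg_left ?_ (norm_nonneg _)
        have h := aux_sum_abs_le_sqrt (θ - θ')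
        have hsub : ∀ k, (θ - θ') k = θ k - θ' k := fun k => rfl
        calc ∑ k, |θ k - θ' k| = ∑ k, |(θ - θ') k| := by
              exact Finset.sum_congr rfl fun k _ => by rw [hsub]
          _ ≤ Real.sqrt K * ‖θ - θ'‖ := h
    _ = Real.sqrt K * ‖O‖ * ‖θ - θ'‖ := by ring

lemma aux_sgd_agree {N K : ℕ} {Y : Type*} (V : Fin (K + 1) → Matrix (Fin (2^N)) (Fin (2^N)) ℂ)
    (P : Fin K → Matrix (Fin (2^N)) (Fin (2^N)) ℂ)
    (O : Matrix (Fin (2^N)) (Fin (2^N)) ℂ) (dℓ : ℝ → Y → ℝ) {m : ℕ}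
    (ρS ρS' : Fin m → Matrix (Fin (2^N)) (Fin (2^N)) ℂ) (lab lab' : Fin m → Y)
    (i₀ : Fin m) (hagree : ∀ i, i ≠ i₀ → ρS i = ρS' i ∧ lab i = lab' i)
    (η : ℕ → ℝ) (θ₀ : EuclideanSpace ℝ (Fin K)) {T : ℕ} (σ : Fin T → Fin m) (t₀ : ℕ)
    (havoid : ∀ t : Fin T, (t : ℕ) < t₀ → σ t ≠ i₀) :
    ∀ s, s ≤ t₀ → sgdIter V P O dℓ ρS lab η θ₀ σ s = sgdIter V P O dℓ ρS' lab' η θ₀ σ s := by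
  intro s
  induction s with
  | zero => intro _; rfl
  | succ t ih =>
    intro hst
    have ihe := ih (le_trans (Nat.le_succ t) hst)
    by_cases h : t < T
    · have hne : σ ⟨t, h⟩ ≠ i₀ := havoid ⟨t, h⟩ (lt_of_lt_of_le (Nat.lt_of_succ_le hst) le_rfl)
      obtain ⟨h1, h2⟩ := hagree _ hne
      simp only [sgdIter, dif_pos h, ihe, h1, h2]
    · simp only [sgdIter, dif_neg h, ihe]

lemma aux_card_eval {T m : ℕ} (t : Fin T) (i₀ : Fin m) [DecidablePred fun σ : Fin T → Fin m => σ t = i₀] :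
    (Finset.univ.filter fun σ : Fin T → Fin m => σ t = i₀).card ≤ m ^ (T - 1) := by
  classical
  have hcard : Fintype.card ({j : Fin T // j ≠ t} → Fin m) = m ^ (T - 1) := by
    rw [Fintype.card_fun, Fintype.card_fin]
    congr 1
    have : Fintype.card {j : Fin T // j ≠ t} = Fintype.card (Fin T) - 1 := by
      rw [Fintype.card_subtype_compl, Fintype.card_subtype_eq]
    rw [this, Fintype.card_fin]
  calc (Finset.univ.filter fun σ : Fin T → Fin m => σ t = i₀).card
      ≤ (Finset.univ : Finset ({j : Fin T // j ≠ t} → Fin m)).card := by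
        refine Finset.card_le_card_of_injOn (fun σ => fun j => σ j.1)
          (fun σ _ => Finset.mem_univ _) ?_
        intro σ₁ h₁ σ₂ h₂ heq
        have ht₁ := (Finset.mem_filter.mp h₁).2
        have ht₂ := (Finset.mem_filter.mp h₂).2
        funext j
        by_cases hj : j = t
        · rw [hj, ht₁, ht₂]
        · exact congrFun heq ⟨j, hj⟩
    _ = m ^ (T - 1) := by rw [Finset.card_univ, hcard]

end AuxLemmas3

open Classical in
/-- Lemma C.4: with `δ_t = ‖θ_t − θ′_t‖₂`, for every labeled test example
and every `t₀ ∈ {0,…,m}` such that the event `{δ_{t₀} = 0}` has positive probability: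
`|E_A[ℓ(f_{θ_T}(x); y) − ℓ(f_{θ′_T}(x); y)]| ≤ α √K ‖O‖ E_A[δ_T ∣ δ_{t₀} = 0] + t₀ M / m`. -/
theorem qnn_sgd_stability_conditional {N K : ℕ} {Y : Type*}
    (V : Fin (K + 1) → Matrix (Fin (2^N)) (Fin (2^N)) ℂ)
    (hV : ∀ k, V k ∈ Matrix.unitaryGroup (Fin (2^N)) ℂ)
    (P : Fin K → Matrix (Fin (2^N)) (Fin (2^N)) ℂ)
    (hPH : ∀ k, (P k).IsHermitian)
    (hPU : ∀ k, P k ∈ Matrix.unitaryGroup (Fin (2^N)) ℂ)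
    (O : Matrix (Fin (2^N)) (Fin (2^N)) ℂ) (hO : O.IsHermitian)
    (ℓ dℓ : ℝ → Y → ℝ) (α ν M : ℝ) (hα : 0 ≤ α) (hν : 0 ≤ ν)
    (hLip : ∀ (y : Y) (a b : ℝ), |ℓ a y - ℓ b y| ≤ α * |a - b|)
    (hderiv : ∀ (y : Y) (a : ℝ), HasDerivAt (fun s => ℓ s y) (dℓ a y) a)
    (hSmooth : ∀ (y : Y) (a b : ℝ), |dℓ a y - dℓ b y| ≤ ν * |a - b|)
    -- the loss takes values in `[0, M]`
    (hbound : ∀ (a : ℝ) (y : Y), ℓ a y ∈ Set.Icc 0 M)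
    {m : ℕ} (hm : 0 < m)
    (ρS ρS' : Fin m → Matrix (Fin (2^N)) (Fin (2^N)) ℂ) (lab lab' : Fin m → Y)
    (hρS : ∀ i, (ρS i).PosSemidef ∧ (ρS i).trace = 1)
    (hρS' : ∀ i, (ρS' i).PosSemidef ∧ (ρS' i).trace = 1)
    (hdiff : ∃ i₀ : Fin m, (∀ i, i ≠ i₀ → ρS i = ρS' i ∧ lab i = lab' i) ∧
      ¬(ρS i₀ = ρS' i₀ ∧ lab i₀ = lab' i₀))
    (η : ℕ → ℝ) (hη : ∀ t, 0 ≤ η t) (θ₀ : EuclideanSpace ℝ (Fin K)) (T : ℕ)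
    (ρz : Matrix (Fin (2^N)) (Fin (2^N)) ℂ) (hρz : ρz.PosSemidef) (hρztr : ρz.trace = 1)
    (yz : Y) (t₀ : ℕ) (ht₀ : t₀ ≤ m)
    -- the event `{δ_{t₀} = 0}` has positive probability
    (hev : (Finset.univ.filter fun σ : Fin T → Fin m =>
        ‖sgdIter V P O dℓ ρS lab η θ₀ σ t₀
          - sgdIter V P O dℓ ρS' lab' η θ₀ σ t₀‖ = 0).Nonempty) :
    |expA fun σ : Fin T → Fin m =>
        ℓ (qnnOut V P O ρz (sgdIter V P O dℓ ρS lab η θ₀ σ T)) yz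
          - ℓ (qnnOut V P O ρz (sgdIter V P O dℓ ρS' lab' η θ₀ σ T)) yz|
      ≤ α * Real.sqrt K * ‖O‖
          * ((∑ σ ∈ Finset.univ.filter fun σ : Fin T → Fin m =>
                ‖sgdIter V P O dℓ ρS lab η θ₀ σ t₀
                  - sgdIter V P O dℓ ρS' lab' η θ₀ σ t₀‖ = 0,
              ‖sgdIter V P O dℓ ρS lab η θ₀ σ T
                - sgdIter V P O dℓ ρS' lab' η θ₀ σ T‖)
            / (Finset.univ.filter fun σ : Fin T → Fin m =>
                ‖sgdIter V P O dℓ ρS lab η θ₀ σ t₀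
                  - sgdIter V P O dℓ ρS' lab' η θ₀ σ t₀‖ = 0).card)
        + t₀ * M / m := by
  classical
  obtain ⟨i₀, hagree, -⟩ := hdiff
  have hM : 0 ≤ M := le_trans (hbound 0 yz).1 (hbound 0 yz).2
  have hm0 : ((m : ℝ)) ≠ 0 := by exact_mod_cast hm.ne'
  set E := (Finset.univ.filter fun σ : Fin T → Fin m =>
      ‖sgdIter V P O dℓ ρS lab η θ₀ σ t₀
        - sgdIter V P O dℓ ρS' lab' η θ₀ σ t₀‖ = 0) with hE
  set c : ℝ := α * Real.sqrt K * ‖O‖ with hc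
  have hc0 : 0 ≤ c := by rw [hc]; positivity
  have hcardE : 0 < (E.card : ℝ) := by exact_mod_cast Finset.card_pos.mpr hev
  have hguniv : ∀ σ : Fin T → Fin m,
      |ℓ (qnnOut V P O ρz (sgdIter V P O dℓ ρS lab η θ₀ σ T)) yz
        - ℓ (qnnOut V P O ρz (sgdIter V P O dℓ ρS' lab' η θ₀ σ T)) yz|
      ≤ c * ‖sgdIter V P O dℓ ρS lab η θ₀ σ T - sgdIter V P O dℓ ρS' lab' η θ₀ σ T‖ := by
    intro σ
    calc |ℓ (qnnOut V P O ρz (sgdIter V P O dℓ ρS lab η θ₀ σ T)) yz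
        - ℓ (qnnOut V P O ρz (sgdIter V P O dℓ ρS' lab' η θ₀ σ T)) yz|
        ≤ α * |qnnOut V P O ρz (sgdIter V P O dℓ ρS lab η θ₀ σ T)
          - qnnOut V P O ρz (sgdIter V P O dℓ ρS' lab' η θ₀ σ T)| := hLip yz _ _
      _ ≤ α * (Real.sqrt K * ‖O‖
          * ‖sgdIter V P O dℓ ρS lab η θ₀ σ T - sgdIter V P O dℓ ρS' lab' η θ₀ σ T‖) :=
          mul_le_mul_of_nonneg_left
            (aux_qnnOut_lip V hV P hPH hPU O ρz hρz hρztr _ _) hα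
      _ = c * ‖sgdIter V P O dℓ ρS lab η θ₀ σ T
          - sgdIter V P O dℓ ρS' lab' η θ₀ σ T‖ := by rw [hc]; ring
  have hgM : ∀ σ : Fin T → Fin m,
      |ℓ (qnnOut V P O ρz (sgdIter V P O dℓ ρS lab η θ₀ σ T)) yz
        - ℓ (qnnOut V P O ρz (sgdIter V P O dℓ ρS' lab' η θ₀ σ T)) yz| ≤ M := by
    intro σ
    have h1 := hbound (qnnOut V P O ρz (sgdIter V P O dℓ ρS lab η θ₀ σ T)) yz
    have h2 := hbound (qnnOut V P O ρz (sgdIter V P O dℓ ρS' lab' η θ₀ σ T)) yz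
    rw [abs_sub_le_iff]
    exact ⟨by linarith [h1.1, h1.2, h2.1, h2.2], by linarith [h1.1, h1.2, h2.1, h2.2]⟩
  have hFsub : ∀ σ : Fin T → Fin m, σ ∉ E → ∃ t : Fin T, (t : ℕ) < t₀ ∧ σ t = i₀ := by
    intro σ hσ
    by_contra hno
    push_neg at hno
    apply hσ
    rw [hE, Finset.mem_filter]
    refine ⟨Finset.mem_univ _, ?_⟩
    rw [aux_sgd_agree V P O dℓ ρS ρS' lab lab' i₀ hagree η θ₀ σ t₀
      (fun t ht => hno t ht) t₀ le_rfl, sub_self, norm_zero]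
  have hFcard : ((Finset.univ \ E).card : ℝ) * M / (m : ℝ) ^ T ≤ t₀ * M / m := by
    rcases Nat.eq_zero_or_pos T with hT | hT
    · have hempty : Finset.univ \ E = ∅ := by
        rw [Finset.sdiff_eq_empty_iff_subset]
        intro σ _
        rw [hE, Finset.mem_filter]
        refine ⟨Finset.mem_univ _, ?_⟩
        rw [aux_sgd_agree V P O dℓ ρS ρS' lab lab' i₀ hagree η θ₀ σ t₀
          (fun t _ => absurd t.2 (by omega)) t₀ le_rfl, sub_self, norm_zero]
      rw [hempty]
      simp only [Finset.card_empty, Nat.cast_zero, zero_mul, zero_div]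
      positivity
    · have hfiltcard : (Finset.univ.filter fun t : Fin T => (t : ℕ) < t₀).card ≤ t₀ := by
        calc (Finset.univ.filter fun t : Fin T => (t : ℕ) < t₀).card
            ≤ (Finset.range t₀).card := Finset.card_le_card_of_injOn Fin.val
              (fun t ht => Finset.mem_range.mpr (Finset.mem_filter.mp ht).2)
              (Fin.val_injective.injOn)
          _ = t₀ := Finset.card_range t₀
      have hcount : (Finset.univ \ E).card ≤ t₀ * m ^ (T - 1) := by
        calc (Finset.univ \ E).card
            ≤ ((Finset.univ.filter fun t : Fin T => (t : ℕ) < t₀).biUnion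
              (fun t => Finset.univ.filter fun σ : Fin T → Fin m => σ t = i₀)).card := by
              refine Finset.card_le_card ?_
              intro σ hσ
              obtain ⟨t, ht, hσt⟩ := hFsub σ (Finset.mem_sdiff.mp hσ).2
              exact Finset.mem_biUnion.mpr ⟨t, Finset.mem_filter.mpr ⟨Finset.mem_univ _, ht⟩,
                Finset.mem_filter.mpr ⟨Finset.mem_univ _, hσt⟩⟩
          _ ≤ ∑ t ∈ Finset.univ.filter fun t : Fin T => (t : ℕ) < t₀,
              (Finset.univ.filter fun σ : Fin T → Fin m => σ t = i₀).card :=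
              Finset.card_biUnion_le
          _ ≤ ∑ _t ∈ Finset.univ.filter fun t : Fin T => (t : ℕ) < t₀, m ^ (T - 1) :=
              Finset.sum_le_sum fun t _ => aux_card_eval t i₀
          _ = (Finset.univ.filter fun t : Fin T => (t : ℕ) < t₀).card * m ^ (T - 1) := by
              rw [Finset.sum_const, smul_eq_mul]
          _ ≤ t₀ * m ^ (T - 1) := Nat.mul_le_mul_right _ hfiltcard
      have hcountR : ((Finset.univ \ E).card : ℝ) ≤ (t₀ : ℝ) * (m : ℝ) ^ (T - 1) := by
        exact_mod_cast hcount
      have hpowT : ((m : ℝ)) ^ T = (m : ℝ) ^ (T - 1) * m := by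
        rw [← pow_succ, Nat.sub_add_cancel hT]
      have hpow0 : (0 : ℝ) < (m : ℝ) ^ (T - 1) := by positivity
      calc ((Finset.univ \ E).card : ℝ) * M / (m : ℝ) ^ T
          ≤ ((t₀ : ℝ) * (m : ℝ) ^ (T - 1)) * M / ((m : ℝ) ^ (T - 1) * m) := by
            rw [hpowT]
            gcongr
          _ = t₀ * M / m := by
            field_simp
  have hexp : (expA fun σ : Fin T → Fin m =>
        ℓ (qnnOut V P O ρz (sgdIter V P O dℓ ρS lab η θ₀ σ T)) yz
          - ℓ (qnnOut V P O ρz (sgdIter V P O dℓ ρS' lab' η θ₀ σ T)) yz)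
      = (∑ σ : Fin T → Fin m,
          (ℓ (qnnOut V P O ρz (sgdIter V P O dℓ ρS lab η θ₀ σ T)) yz
            - ℓ (qnnOut V P O ρz (sgdIter V P O dℓ ρS' lab' η θ₀ σ T)) yz)) / (m : ℝ) ^ T := rfl
  have hsplit := Finset.sum_sdiff (f := fun σ : Fin T → Fin m =>
      ℓ (qnnOut V P O ρz (sgdIter V P O dℓ ρS lab η θ₀ σ T)) yz
        - ℓ (qnnOut V P O ρz (sgdIter V P O dℓ ρS' lab' η θ₀ σ T)) yz)
    (Finset.filter_subset (fun σ : Fin T → Fin m =>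
      ‖sgdIter V P O dℓ ρS lab η θ₀ σ t₀
        - sgdIter V P O dℓ ρS' lab' η θ₀ σ t₀‖ = 0) Finset.univ)
  have habs : |∑ σ : Fin T → Fin m,
      (ℓ (qnnOut V P O ρz (sgdIter V P O dℓ ρS lab η θ₀ σ T)) yz
        - ℓ (qnnOut V P O ρz (sgdIter V P O dℓ ρS' lab' η θ₀ σ T)) yz)|
      ≤ ((Finset.univ \ E).card : ℝ) * M
        + c * ∑ σ ∈ E, ‖sgdIter V P O dℓ ρS lab η θ₀ σ T
            - sgdIter V P O dℓ ρS' lab' η θ₀ σ T‖ := by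
    rw [← hsplit]
    calc |(∑ σ ∈ Finset.univ \ E,
          (ℓ (qnnOut V P O ρz (sgdIter V P O dℓ ρS lab η θ₀ σ T)) yz
            - ℓ (qnnOut V P O ρz (sgdIter V P O dℓ ρS' lab' η θ₀ σ T)) yz))
          + ∑ σ ∈ E,
          (ℓ (qnnOut V P O ρz (sgdIter V P O dℓ ρS lab η θ₀ σ T)) yz
            - ℓ (qnnOut V P O ρz (sgdIter V P O dℓ ρS' lab' η θ₀ σ T)) yz)|
        ≤ |∑ σ ∈ Finset.univ \ E,
          (ℓ (qnnOut V P O ρz (sgdIter V P O dℓ ρS lab η θ₀ σ T)) yz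
            - ℓ (qnnOut V P O ρz (sgdIter V P O dℓ ρS' lab' η θ₀ σ T)) yz)|
          + |∑ σ ∈ E,
          (ℓ (qnnOut V P O ρz (sgdIter V P O dℓ ρS lab η θ₀ σ T)) yz
            - ℓ (qnnOut V P O ρz (sgdIter V P O dℓ ρS' lab' η θ₀ σ T)) yz)| := abs_add_le _ _
      _ ≤ (∑ σ ∈ Finset.univ \ E,
          |ℓ (qnnOut V P O ρz (sgdIter V P O dℓ ρS lab η θ₀ σ T)) yz
            - ℓ (qnnOut V P O ρz (sgdIter V P O dℓ ρS' lab' η θ₀ σ T)) yz|)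
          + ∑ σ ∈ E,
          |ℓ (qnnOut V P O ρz (sgdIter V P O dℓ ρS lab η θ₀ σ T)) yz
            - ℓ (qnnOut V P O ρz (sgdIter V P O dℓ ρS' lab' η θ₀ σ T)) yz| :=
          add_le_add (Finset.abs_sum_le_sum_abs _ _) (Finset.abs_sum_le_sum_abs _ _)
      _ ≤ (∑ _σ ∈ Finset.univ \ E, M)
          + ∑ σ ∈ E, c * ‖sgdIter V P O dℓ ρS lab η θ₀ σ T
              - sgdIter V P O dℓ ρS' lab' η θ₀ σ T‖ :=
          add_le_add (Finset.sum_le_sum fun σ _ => hgM σ)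
            (Finset.sum_le_sum fun σ _ => hguniv σ)
      _ = ((Finset.univ \ E).card : ℝ) * M
          + c * ∑ σ ∈ E, ‖sgdIter V P O dℓ ρS lab η θ₀ σ T
              - sgdIter V P O dℓ ρS' lab' η θ₀ σ T‖ := by
          rw [Finset.sum_const, nsmul_eq_mul, Finset.mul_sum]
  have hEcard_le : (E.card : ℝ) ≤ (m : ℝ) ^ T := by
    have h1 : E.card ≤ m ^ T := by
      calc E.card ≤ Fintype.card (Fin T → Fin m) := Finset.card_le_univ E
        _ = m ^ T := by rw [Fintype.card_fun, Fintype.card_fin, Fintype.card_fin]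
    exact_mod_cast h1
  have hSnonneg : 0 ≤ ∑ σ ∈ E, ‖sgdIter V P O dℓ ρS lab η θ₀ σ T
      - sgdIter V P O dℓ ρS' lab' η θ₀ σ T‖ :=
    Finset.sum_nonneg fun σ _ => norm_nonneg _
  have hpowT0 : (0 : ℝ) < (m : ℝ) ^ T := by positivity
  rw [hexp, abs_div, abs_of_pos hpowT0]
  calc |∑ σ : Fin T → Fin m,
      (ℓ (qnnOut V P O ρz (sgdIter V P O dℓ ρS lab η θ₀ σ T)) yz
        - ℓ (qnnOut V P O ρz (sgdIter V P O dℓ ρS' lab' η θ₀ σ T)) yz)| / (m : ℝ) ^ T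
      ≤ (((Finset.univ \ E).card : ℝ) * M
        + c * ∑ σ ∈ E, ‖sgdIter V P O dℓ ρS lab η θ₀ σ T
            - sgdIter V P O dℓ ρS' lab' η θ₀ σ T‖) / (m : ℝ) ^ T := by gcongr
    _ = c * ((∑ σ ∈ E, ‖sgdIter V P O dℓ ρS lab η θ₀ σ T
            - sgdIter V P O dℓ ρS' lab' η θ₀ σ T‖) / (m : ℝ) ^ T)
        + ((Finset.univ \ E).card : ℝ) * M / (m : ℝ) ^ T := by ring
    _ ≤ c * ((∑ σ ∈ E, ‖sgdIter V P O dℓ ρS lab η θ₀ σ T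
            - sgdIter V P O dℓ ρS' lab' η θ₀ σ T‖) / (E.card : ℝ))
        + t₀ * M / m := by
        refine add_le_add ?_ hFcard
        refine mul_le_mul_of_nonneg_left ?_ hc0
        gcongr


end
end
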